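/- arXiv:2212.12108 — 7 statements merged into one kernel-verified Lean document; each statement's English description precedes it below -/
import Mathlib

section
/- Let h : [0,∞) → [0,∞) be a nondecreasing and concave function with h(0) = 0, and let r > 1 be a real number. Then the function x ↦ (h(x^{1/r}))^r is nondecreasing and concave on [0,∞). -/
open Set

private lemma mink2 {r a b x₁ y₁ x₂ y₂ : ℝ} (hr : 1 ≤ r) (ha : 0 ≤ a) (hb : 0 ≤ b)
    (hx₁ : 0 ≤ x₁) (hy₁ : 0 ≤ y₁) (hx₂ : 0 ≤ x₂) (hy₂ : 0 ≤ y₂) :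
    (a * (x₁ + x₂) ^ r + b * (y₁ + y₂) ^ r) ^ (1/r) ≤
      (a * x₁ ^ r + b * y₁ ^ r) ^ (1/r) + (a * x₂ ^ r + b * y₂ ^ r) ^ (1/r) := by
  have hr0 : r ≠ 0 := by positivity
  have key := Real.Lp_add_le_of_nonneg (s := Finset.univ) (p := r)
      (f := ![a ^ (1/r) * x₁, b ^ (1/r) * y₁]) (g := ![a ^ (1/r) * x₂, b ^ (1/r) * y₂]) hr
      (by intro i _; fin_cases i <;> simp <;> positivity)
      (by intro i _; fin_cases i <;> simp <;> positivity)
  have hpow : ∀ c z : ℝ, 0 ≤ c → 0 ≤ z → (c ^ (1/r) * z) ^ r = c * z ^ r := by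
    intro c z hc hz
    rw [Real.mul_rpow (by positivity) hz, ← Real.rpow_mul hc, one_div,
      inv_mul_cancel₀ hr0, Real.rpow_one]
  simp only [Fin.sum_univ_two, Matrix.cons_val_zero, Matrix.cons_val_one, Matrix.head_cons,
    ← mul_add] at key
  rwa [hpow a _ ha (by positivity), hpow b _ hb (by positivity), hpow a _ ha hx₁,
    hpow b _ hb hy₁, hpow a _ ha hx₂, hpow b _ hb hy₂] at key

private lemma aux_concave (h : ℝ → ℝ) (r : ℝ)
    (hr : 1 < r)
    (h_nonneg : ∀ x ∈ Ici (0 : ℝ), 0 ≤ h x)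
    (h_mono : MonotoneOn h (Ici (0 : ℝ)))
    (h_concave : ConcaveOn ℝ (Ici (0 : ℝ)) h)
    (h_zero : h 0 = 0)
    (a b la mu : ℝ) (ha : 0 ≤ a) (hab : a ≤ b) (hla : 0 ≤ la) (hmu : 0 ≤ mu)
    (hlamu : la + mu = 1) :
    la * (h (a ^ (1/r))) ^ r + mu * (h (b ^ (1/r))) ^ r
      ≤ (h ((la * a + mu * b) ^ (1/r))) ^ r := by
  have hr0 : r ≠ 0 := by positivity
  have hr1 : (1:ℝ) ≤ r := hr.le
  have hb : 0 ≤ b := ha.trans hab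
  have rinv_rpow : ∀ X : ℝ, 0 ≤ X → (X ^ (1/r)) ^ r = X := by
    intro X hX
    rw [← Real.rpow_mul hX, one_div, inv_mul_cancel₀ hr0, Real.rpow_one]
  have rpow_rinv : ∀ X : ℝ, 0 ≤ X → (X ^ r) ^ (1/r) = X := by
    intro X hX
    rw [← Real.rpow_mul hX, mul_one_div, div_self hr0, Real.rpow_one]
  set u := a ^ (1/r) with hu_def
  set v := b ^ (1/r) with hv_def
  have hu0 : 0 ≤ u := Real.rpow_nonneg ha _
  have hv0 : 0 ≤ v := Real.rpow_nonneg hb _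
  have hu0' : u ∈ Ici (0:ℝ) := mem_Ici.mpr hu0
  have hv0' : v ∈ Ici (0:ℝ) := mem_Ici.mpr hv0
  have huv : u ≤ v := Real.rpow_le_rpow ha hab (by positivity)
  have hur : u ^ r = a := rinv_rpow a ha
  have hvr : v ^ r = b := rinv_rpow b hb
  rcases eq_or_lt_of_le huv with heq | hlt
  · -- u = v, so a = b
    have hab' : a = b := by rw [← hur, ← hvr, heq]
    have hcb : la * a + mu * b = b := by rw [hab']; nlinarith
    rw [hcb, ← hv_def, heq]
    nlinarith [Real.rpow_nonneg (h_nonneg v hv0) r]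
  · -- u < v
    have hvpos : 0 < v := lt_of_le_of_lt hu0 hlt
    have hc0 : 0 ≤ la * a + mu * b := by positivity
    set w := (la * a + mu * b) ^ (1/r) with hw_def
    have hw0 : 0 ≤ w := Real.rpow_nonneg hc0 _
    have hwr : w ^ r = la * u ^ r + mu * v ^ r := by rw [rinv_rpow _ hc0, hur, hvr]
    have hac : a ≤ la * a + mu * b := by nlinarith
    have hcb : la * a + mu * b ≤ b := by nlinarith
    have huw : u ≤ w := Real.rpow_le_rpow ha hac (by positivity)
    have hwv : w ≤ v := Real.rpow_le_rpow hc0 hcb (by positivity)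
    set θ := (v - w) / (v - u) with hθ_def
    have hvu : 0 < v - u := by linarith
    have hvu' : v - u ≠ 0 := hvu.ne'
    have hθ0 : 0 ≤ θ := div_nonneg (by linarith) hvu.le
    have hθ1 : θ ≤ 1 := by rw [hθ_def, div_le_one hvu]; linarith
    have hwθ : θ * u + (1 - θ) * v = w := by
      rw [hθ_def]; field_simp; ring
    set p := h u with hp_def
    set q := h v with hq_def
    have hp0 : 0 ≤ p := h_nonneg u hu0'
    have hq0 : 0 ≤ q := h_nonneg v hv0'
    have hpq : p ≤ q := h_mono hu0' hv0' huv
    -- ratio: q * u ≤ p * v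
    have hratio : q * u ≤ p * v := by
      have hcomb := h_concave.2 hv0' (mem_Ici.mpr le_rfl)
        (show (0:ℝ) ≤ u / v from div_nonneg hu0 hv0)
        (show (0:ℝ) ≤ 1 - u / v by rw [sub_nonneg, div_le_one hvpos]; exact huv) (by ring)
      simp only [smul_eq_mul, h_zero, mul_zero, add_zero,
        div_mul_cancel₀ u hvpos.ne'] at hcomb
      have h2 := mul_le_mul_of_nonneg_right hcomb hv0
      calc q * u = u / v * q * v := by field_simp
        _ ≤ p * v := h2
    set α := (q - p) / (v - u) with hα_def
    set β := (p * v - q * u) / (v - u) with hβ_def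
    have hα0 : 0 ≤ α := div_nonneg (by linarith) hvu.le
    have hβ0 : 0 ≤ β := div_nonneg (by linarith) hvu.le
    have hpαβ : α * u + β = p := by rw [hα_def, hβ_def]; field_simp; ring
    have hqαβ : α * v + β = q := by rw [hα_def, hβ_def]; field_simp; ring
    -- Minkowski
    have hm := mink2 (a := la) (b := mu) (x₁ := α * u) (x₂ := β) (y₁ := α * v) (y₂ := β)
      hr1 hla hmu (by positivity) (by positivity) hβ0 hβ0
    rw [hpαβ, hqαβ] at hm
    have hterm1 : (la * (α * u) ^ r + mu * (α * v) ^ r) ^ (1/r) = α * w := by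
      rw [Real.mul_rpow hα0 hu0, Real.mul_rpow hα0 hv0,
        show la * (α ^ r * u ^ r) + mu * (α ^ r * v ^ r)
          = α ^ r * (la * u ^ r + mu * v ^ r) by ring,
        ← hwr, ← Real.mul_rpow hα0 hw0, rpow_rinv _ (by positivity)]
    have hterm2 : (la * β ^ r + mu * β ^ r) ^ (1/r) = β := by
      rw [show la * β ^ r + mu * β ^ r = β ^ r by rw [← add_mul, hlamu, one_mul],
        rpow_rinv _ hβ0]
    rw [hterm1, hterm2] at hm
    -- α * w + β = θ * p + (1 - θ) * q
    have hαwβ : α * w + β = θ * p + (1 - θ) * q := by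
      linear_combination (-α) * hwθ + θ * hpαβ + (1 - θ) * hqαβ
    rw [hαwβ] at hm
    -- concavity of h at θu + (1-θ)v = w
    have hcon : θ * p + (1 - θ) * q ≤ h w := by
      have := h_concave.2 hu0' hv0' hθ0 (show (0:ℝ) ≤ 1 - θ by linarith) (by ring)
      simp only [smul_eq_mul] at this
      rwa [hwθ] at this
    have hle : (la * p ^ r + mu * q ^ r) ^ (1/r) ≤ h w := le_trans hm hcon
    have hsum0 : 0 ≤ la * p ^ r + mu * q ^ r := by positivity
    calc la * p ^ r + mu * q ^ r
        = ((la * p ^ r + mu * q ^ r) ^ (1/r)) ^ r := (rinv_rpow _ hsum0).symm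
      _ ≤ (h w) ^ r := Real.rpow_le_rpow (Real.rpow_nonneg hsum0 _) hle (by positivity)

/-- If `h : [0,∞) → [0,∞)` is nondecreasing and concave with `h 0 = 0`,
and `r > 1`, then `x ↦ (h (x ^ (1/r))) ^ r` is nondecreasing and concave on `[0,∞)`. -/
theorem stmt0 (h : ℝ → ℝ) (r : ℝ)
    (hr : 1 < r)
    (h_nonneg : ∀ x ∈ Ici (0 : ℝ), 0 ≤ h x)
    (h_mono : MonotoneOn h (Ici (0 : ℝ)))
    (h_concave : ConcaveOn ℝ (Ici (0 : ℝ)) h)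
    (h_zero : h 0 = 0) :
    MonotoneOn (fun x : ℝ => (h (x ^ (1 / r))) ^ r) (Ici (0 : ℝ)) ∧
      ConcaveOn ℝ (Ici (0 : ℝ)) (fun x : ℝ => (h (x ^ (1 / r))) ^ r) := by
  constructor
  · intro x hx y hy hxy
    simp only [mem_Ici] at hx hy
    have h1 : x ^ (1/r) ≤ y ^ (1/r) := Real.rpow_le_rpow hx hxy (by positivity)
    have hx0 : (0:ℝ) ≤ x ^ (1/r) := Real.rpow_nonneg hx _
    have hy0 : (0:ℝ) ≤ y ^ (1/r) := Real.rpow_nonneg hy _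
    exact Real.rpow_le_rpow (h_nonneg _ hx0) (h_mono hx0 hy0 h1) (by positivity)
  · refine ⟨convex_Ici 0, ?_⟩
    intro x hx y hy la mu hla hmu hlamu
    simp only [mem_Ici] at hx hy
    simp only [smul_eq_mul]
    rcases le_total x y with hxy | hyx
    · exact aux_concave h r hr h_nonneg h_mono h_concave h_zero x y la mu hx hxy hla hmu hlamu
    · have key := aux_concave h r hr h_nonneg h_mono h_concave h_zero y x mu la hy hyx hmu hla
        (by linarith)
      rw [show mu * y + la * x = la * x + mu * y by ring] at key
      linarith [key]
end

section
/- Let h : [0,∞) → [0,∞) be a nondecreasing and concave function with h(0) = 0 and h(u) > 0 for all u > 0, and suppose that for every ε > 0 the Lebesgue integral ∫_0^ε du/h(u) diverges (equals +∞). Then for every r with 0 < r < 1 and every ε > 0, the Lebesgue integral ∫_0^ε du/(h(u^{1/r}))^r also diverges (equals +∞). -/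
open Set MeasureTheory

theorem lintegral_image_eq_lintegral_abs_deriv_mul' {s : Set ℝ} {f : ℝ → ℝ} {f' : ℝ → ℝ}
    (hs : MeasurableSet s) (hf' : ∀ x ∈ s, HasDerivWithinAt f (f' x) s x)
    (hf : InjOn f s) (g : ℝ → ENNReal) :
    ∫⁻ x in f '' s, g x = ∫⁻ x in s, ENNReal.ofReal |f' x| * g (f x) := by
  simpa only [ContinuousLinearMap.det_toSpanSingleton] using
    lintegral_image_eq_lintegral_abs_det_fderiv_mul volume hs
      (fun x hx => (hf' x hx).hasFDerivWithinAt) hf g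

/-- If `h : [0,∞) → [0,∞)` is nondecreasing and concave with `h 0 = 0`,
`h u > 0` for `u > 0`, and `∫_0^ε du / h u = ∞` for every `ε > 0`, then for every
`0 < r < 1` and every `ε > 0`, `∫_0^ε du / (h (u^(1/r)))^r = ∞` as well. -/
theorem stmt1 (h : ℝ → ℝ)
    (h_nonneg : ∀ x ∈ Ici (0 : ℝ), 0 ≤ h x)
    (h_mono : MonotoneOn h (Ici (0 : ℝ)))
    (h_concave : ConcaveOn ℝ (Ici (0 : ℝ)) h)
    (h_zero : h 0 = 0)
    (h_pos : ∀ u : ℝ, 0 < u → 0 < h u)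
    (h_div : ∀ ε : ℝ, 0 < ε →
      ∫⁻ u in Ioo (0 : ℝ) ε, ENNReal.ofReal (1 / h u) = ⊤) :
    ∀ r : ℝ, 0 < r → r < 1 → ∀ ε : ℝ, 0 < ε →
      ∫⁻ u in Ioo (0 : ℝ) ε, ENNReal.ofReal (1 / (h (u ^ (1 / r))) ^ r) = ⊤ := by
  intro r hr0 hr1 ε hε
  set δ : ℝ := ε ^ (1 / r) with hδdef
  have hδ : 0 < δ := Real.rpow_pos_of_pos hε _
  set m : ℝ := h δ / δ with hmdef
  have hm : 0 < m := div_pos (h_pos δ hδ) hδ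
  -- concavity bound
  have key : ∀ v : ℝ, 0 < v → v < δ → m ≤ h v / v := by
    intro v hv hvδ
    have hvδ' : v / δ ≤ 1 := (div_le_one hδ).2 hvδ.le
    have : (v / δ) * h δ ≤ h v := by
      calc (v / δ) * h δ ≤ (1 - v / δ) * h 0 + (v / δ) * h δ := by
            rw [h_zero, mul_zero, zero_add]
      _ ≤ h ((1 - v/δ) • (0:ℝ) + (v/δ) • δ) := h_concave.2 self_mem_Ici
            (mem_Ici.2 hδ.le) (by linarith) (by positivity) (by ring)
      _ = h v := by
            simp only [smul_eq_mul, mul_zero, zero_add]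
            congr 1
            field_simp
    rw [hmdef, div_le_div_iff₀ hδ hv]
    calc h δ * v = (v / δ) * h δ * δ := by field_simp
    _ ≤ h v * δ := by
        have := mul_le_mul_of_nonneg_right this hδ.le
        linarith
  -- change of variables
  have himg : (fun v : ℝ => v ^ r) '' Ioo 0 δ = Ioo 0 ε := by
    ext u
    simp only [mem_image, mem_Ioo]
    constructor
    · rintro ⟨v, ⟨hv0, hvδ⟩, rfl⟩
      constructor
      · exact Real.rpow_pos_of_pos hv0 r
      · calc v ^ r < δ ^ r := Real.rpow_lt_rpow hv0.le hvδ hr0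
        _ = ε := by
            rw [hδdef, ← Real.rpow_mul hε.le, one_div, inv_mul_cancel₀ hr0.ne', Real.rpow_one]
    · rintro ⟨hu0, huε⟩
      refine ⟨u ^ (1 / r), ⟨Real.rpow_pos_of_pos hu0 _, ?_⟩, ?_⟩
      · exact Real.rpow_lt_rpow hu0.le huε (by positivity)
      · rw [← Real.rpow_mul hu0.le, one_div, inv_mul_cancel₀ hr0.ne', Real.rpow_one]
  have hderiv : ∀ v ∈ Ioo (0:ℝ) δ,
      HasDerivWithinAt (fun v : ℝ => v ^ r) (r * v ^ (r - 1)) (Ioo 0 δ) v := by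
    intro v hv
    have := Real.hasDerivAt_rpow_const (x := v) (p := r) (Or.inl hv.1.ne')
    simpa [mul_comm] using this.hasDerivWithinAt
  have hinj : InjOn (fun v : ℝ => v ^ r) (Ioo 0 δ) := by
    intro a ha b hb hab
    have hab' : a ^ r = b ^ r := hab
    have : (a ^ r) ^ (1/r) = (b ^ r) ^ (1/r) := by rw [hab']
    rwa [← Real.rpow_mul ha.1.le, ← Real.rpow_mul hb.1.le, one_div,
      mul_inv_cancel₀ hr0.ne', Real.rpow_one, Real.rpow_one] at this
  rw [← himg, lintegral_image_eq_lintegral_abs_deriv_mul' measurableSet_Ioo hderiv hinj]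
  -- lower bound by constant times 1/h
  set c : ℝ := r * m ^ (1 - r) with hcdef
  have hc : 0 < c := by
    apply mul_pos hr0 (Real.rpow_pos_of_pos hm _)
  have hbound : ∀ v ∈ Ioo (0:ℝ) δ,
      ENNReal.ofReal c * ENNReal.ofReal (1 / h v) ≤
      ENNReal.ofReal |r * v ^ (r - 1)| * ENNReal.ofReal (1 / (h ((v ^ r) ^ (1 / r))) ^ r) := by
    intro v hv
    obtain ⟨hv0, hvδ⟩ := hv
    have hhv : 0 < h v := h_pos v hv0
    have hvrr : (v ^ r) ^ (1 / r) = v := by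
      rw [← Real.rpow_mul hv0.le, one_div, mul_inv_cancel₀ hr0.ne', Real.rpow_one]
    rw [hvrr, ← ENNReal.ofReal_mul hc.le, ← ENNReal.ofReal_mul (abs_nonneg _)]
    apply ENNReal.ofReal_le_ofReal
    have habs : |r * v ^ (r - 1)| = r * v ^ (r - 1) := by
      rw [abs_of_pos]
      exact mul_pos hr0 (Real.rpow_pos_of_pos hv0 _)
    rw [habs]
    -- goal : c * (1 / h v) ≤ r * v ^ (r-1) * (1 / h v ^ r)
    have hstep : m ^ (1 - r) ≤ (h v / v) ^ (1 - r) :=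
      Real.rpow_le_rpow hm.le (key v hv0 hvδ) (by linarith)
    have e1 : h v / h v ^ r = h v ^ ((1:ℝ) - r) := by
      rw [Real.rpow_sub hhv, Real.rpow_one]
    have e2 : v ^ (r - 1) = (v ^ ((1:ℝ) - r))⁻¹ := by
      rw [← Real.rpow_neg hv0.le]
      norm_num
    have hrw : (h v / v) ^ (1 - r) = (h v / h v ^ r) * v ^ (r - 1) := by
      rw [Real.div_rpow hhv.le hv0.le, e1, e2, div_eq_mul_inv]
    have hhvr : 0 < h v ^ r := Real.rpow_pos_of_pos hhv r
    calc c * (1 / h v) = r * (m ^ (1 - r) / h v) := by rw [hcdef]; ring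
    _ ≤ r * ((h v / h v ^ r) * v ^ (r - 1) / h v) := by
        gcongr
        rw [← hrw]; exact hstep
    _ = r * v ^ (r - 1) * (1 / h v ^ r) := by
        field_simp
  refine eq_top_iff.2 ?_
  calc (⊤ : ENNReal) = ENNReal.ofReal c * ∫⁻ v in Ioo (0:ℝ) δ, ENNReal.ofReal (1 / h v) := by
        rw [h_div δ hδ, ENNReal.mul_top (by simpa using hc)]
  _ = ∫⁻ v in Ioo (0:ℝ) δ, ENNReal.ofReal c * ENNReal.ofReal (1 / h v) :=
        (lintegral_const_mul' _ _ ENNReal.ofReal_ne_top).symm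
  _ ≤ _ := by
        rw [← lintegral_indicator measurableSet_Ioo, ← lintegral_indicator measurableSet_Ioo]
        apply lintegral_mono
        intro v
        by_cases hv : v ∈ Ioo (0:ℝ) δ
        · simp only [indicator_of_mem hv]
          exact hbound v hv
        · simp [indicator_of_notMem hv]
end

section
/- Backward Bihari inequality: let h : [0,∞) → [0,∞) be a continuous nondecreasing function with h(0) = 0 such that for every ε > 0 the Lebesgue integral ∫_0^ε du/h(u) diverges. Let T > 0, C ≥ 0, a ≥ 0, and let u : [0,T] → [0,∞) be a continuous function satisfying u(t) ≤ a + C ∫_t^T h(u(s)) ds for every t ∈ [0,T]. If a = 0, then u(t) = 0 for all t ∈ [0,T]. -/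
open Set MeasureTheory intervalIntegral

/-- Backward Bihari inequality. If `h : [0,∞) → [0,∞)` is continuous,
nondecreasing, `h 0 = 0` with `∫_{0+} du / h u = ∞`, and a continuous nonnegative
function `u` on `[0,T]` satisfies `u t ≤ a + C ∫_t^T h (u s) ds` with `a = 0`,
then `u ≡ 0` on `[0,T]`. -/
theorem stmt2 (h : ℝ → ℝ) (T C a : ℝ) (u : ℝ → ℝ)
    (hT : 0 < T) (hC : 0 ≤ C) (ha : 0 ≤ a)
    (h_nonneg : ∀ x ∈ Ici (0 : ℝ), 0 ≤ h x)
    (h_cont : ContinuousOn h (Ici (0 : ℝ)))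
    (h_mono : MonotoneOn h (Ici (0 : ℝ)))
    (h_zero : h 0 = 0)
    (h_div : ∀ ε : ℝ, 0 < ε →
      ∫⁻ x in Ioo (0 : ℝ) ε, ENNReal.ofReal (1 / h x) = ⊤)
    (u_cont : ContinuousOn u (Icc 0 T))
    (u_nonneg : ∀ t ∈ Icc (0 : ℝ) T, 0 ≤ u t)
    (u_bound : ∀ t ∈ Icc (0 : ℝ) T, u t ≤ a + C * ∫ s in t..T, h (u s))
    (ha0 : a = 0) :
    ∀ t ∈ Icc (0 : ℝ) T, u t = 0 := by
  subst ha0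
  -- clamp u and h to get globally continuous functions
  set p : ℝ → ℝ := fun s => max 0 (min s T) with hp
  have p_cont : Continuous p := continuous_const.max (continuous_id.min continuous_const)
  have p_mem : ∀ s, p s ∈ Icc (0:ℝ) T :=
    fun s => ⟨le_max_left _ _, max_le hT.le (min_le_right _ _)⟩
  set uc : ℝ → ℝ := fun s => u (p s) with huc
  have uc_cont : Continuous uc := u_cont.comp_continuous p_cont p_mem
  have uc_eq : ∀ s ∈ Icc (0:ℝ) T, uc s = u s := by
    intro s hs
    simp only [huc, hp, min_eq_left hs.2, max_eq_right hs.1]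
  set hc : ℝ → ℝ := fun x => h (max x 0) with hhc
  have hc_cont : Continuous hc :=
    h_cont.comp_continuous (continuous_id.max continuous_const) (fun x => mem_Ici.2 (le_max_right _ _))
  have hc_eq : ∀ x : ℝ, 0 ≤ x → hc x = h x := by
    intro x hx; simp only [hhc, max_eq_left hx]
  have hc_nonneg : ∀ x, 0 ≤ hc x := fun x => h_nonneg _ (mem_Ici.2 (le_max_right _ _))
  have hc_mono : Monotone hc := fun x y hxy =>
    h_mono (mem_Ici.2 (le_max_right _ _)) (mem_Ici.2 (le_max_right _ _)) (max_le_max hxy le_rfl)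
  -- h is positive on (0,∞)
  have hpos : ∀ x : ℝ, 0 < x → 0 < h x := by
    intro x hx
    by_contra hle
    have hx0 : h x = 0 := le_antisymm (not_lt.1 hle) (h_nonneg x hx.le)
    have : (∫⁻ y in Ioo (0:ℝ) x, ENNReal.ofReal (1 / h y)) = 0 := by
      rw [setLIntegral_congr_fun measurableSet_Ioo
        (fun y hy => ?_), lintegral_zero]
      have hy0 : h y = 0 := le_antisymm (hx0 ▸ h_mono hy.1.le hx.le hy.2.le)
        (h_nonneg y hy.1.le)
      simp [hy0]
    rw [h_div x hx] at this
    exact ENNReal.top_ne_zero this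
  have hcpos : ∀ x : ℝ, 0 < x → 0 < hc x := fun x hx => by
    rw [hc_eq x hx.le]; exact hpos x hx
  -- the integral comparison function
  set g : ℝ → ℝ := fun s => C * hc (uc s) with hg
  have g_cont : Continuous g := continuous_const.mul (hc_cont.comp uc_cont)
  have g_nonneg : ∀ s, 0 ≤ g s := fun s => mul_nonneg hC (hc_nonneg _)
  set v : ℝ → ℝ := fun t => ∫ s in t..T, g s with hv
  have v_eq : ∀ t ∈ Icc (0:ℝ) T, v t = C * ∫ s in t..T, h (u s) := by
    intro t ht
    rw [hv]
    simp only
    rw [← intervalIntegral.integral_const_mul]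
    apply intervalIntegral.integral_congr
    intro s hs
    rw [uIcc_of_le ht.2] at hs
    have hs' : s ∈ Icc (0:ℝ) T := ⟨le_trans ht.1 hs.1, hs.2⟩
    rw [hg]
    simp only
    rw [uc_eq s hs', hc_eq _ (u_nonneg s hs')]
  have u_le_v : ∀ t ∈ Icc (0:ℝ) T, u t ≤ v t := by
    intro t ht
    have := u_bound t ht
    rw [zero_add] at this
    rw [v_eq t ht]; exact this
  have g_int : ∀ a b : ℝ, IntervalIntegrable g volume a b :=
    fun a b => g_cont.intervalIntegrable a b
  have v_deriv : ∀ t : ℝ, HasDerivAt v (-(g t)) t := by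
    intro t
    exact intervalIntegral.integral_hasDerivAt_left (g_int t T)
      ⟨univ, Filter.univ_mem, (g_cont.measurable.aestronglyMeasurable).restrict⟩
      g_cont.continuousAt
  have v_diff : Differentiable ℝ v := fun t => (v_deriv t).differentiableAt
  have v_cont : Continuous v := v_diff.continuous
  have v_nonneg : ∀ t : ℝ, t ≤ T → 0 ≤ v t := fun t htT =>
    intervalIntegral.integral_nonneg htT (fun s _ => g_nonneg s)
  have vT : v T = 0 := intervalIntegral.integral_same
  -- main claim : v vanishes on [0,T]
  have key : ∀ t ∈ Icc (0:ℝ) T, v t = 0 := by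
    by_contra hcon
    push_neg at hcon
    obtain ⟨t₀, ht₀, hvne⟩ := hcon
    have hv₀ : 0 < v t₀ := (v_nonneg t₀ ht₀.2).lt_of_ne (Ne.symm hvne)
    set v₀ : ℝ := v t₀ with hv₀def
    -- C must be positive
    have hCpos : 0 < C := by
      rcases hC.lt_or_eq with h' | h'
      · exact h'
      · exfalso
        apply hvne
        have hg0 : g = fun _ => (0:ℝ) := by funext s; simp [hg, ← h']
        rw [hv₀def]
        simp [hv, hg0]
    -- first zero of v after t₀
    set S : Set ℝ := Icc t₀ T ∩ v ⁻¹' {0} with hS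
    have hSne : S.Nonempty := ⟨T, ⟨⟨ht₀.2, le_refl T⟩, vT⟩⟩
    have hSbdd : BddBelow S := ⟨t₀, fun x hx => hx.1.1⟩
    have hSclosed : IsClosed S := (isClosed_Icc).inter (isClosed_singleton.preimage v_cont)
    set t₁ : ℝ := sInf S with ht₁def
    have ht₁S : t₁ ∈ S := hSclosed.csInf_mem hSne hSbdd
    have ht₀t₁ : t₀ ≤ t₁ := ht₁S.1.1
    have ht₁T : t₁ ≤ T := ht₁S.1.2
    have hvt₁ : v t₁ = 0 := ht₁S.2
    have ht₀lt : t₀ < t₁ := ht₀t₁.lt_of_ne (fun e => hvne (by rw [hv₀def, e]; exact hvt₁))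
    have hvpos : ∀ x ∈ Ico t₀ t₁, 0 < v x := by
      intro x hx
      refine (v_nonneg x (le_trans hx.2.le ht₁T)).lt_of_ne (fun e => ?_)
      have : x ∈ S := ⟨⟨hx.1, le_trans hx.2.le ht₁T⟩, e.symm⟩
      exact absurd (csInf_le hSbdd this) (not_le.2 hx.2)
    -- the Osgood functional
    set F : ℝ → ℝ := fun y => ∫ z in y..v₀, (hc z)⁻¹ with hF
    have hinv_contAt : ∀ z : ℝ, 0 < z → ContinuousAt (fun z => (hc z)⁻¹) z :=
      fun z hz => hc_cont.continuousAt.inv₀ (hcpos z hz).ne'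
    have F_deriv : ∀ y : ℝ, 0 < y → HasDerivAt F (-(hc y)⁻¹) y := by
      intro y hy
      apply intervalIntegral.integral_hasDerivAt_left
      · apply ContinuousOn.intervalIntegrable
        intro z hz
        have hz' : 0 < z := lt_of_lt_of_le (lt_min hy hv₀) hz.1
        exact (hinv_contAt z hz').continuousWithinAt
      · exact ⟨univ, Filter.univ_mem,
          ((hc_cont.measurable.inv).aestronglyMeasurable).restrict⟩
      · exact hinv_contAt y hy
    -- key estimate : ∫_δ^{v₀} 1/hc ≤ C * T for all δ ∈ (0, v₀)
    have key2 : ∀ δ : ℝ, 0 < δ → δ < v₀ → (∫ z in δ..v₀, (hc z)⁻¹) ≤ C * T := by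
      intro δ hδ hδ'
      -- find x with v x = δ
      obtain ⟨x, hxmem, hvx⟩ : ∃ x ∈ Icc t₀ t₁, v x = δ := by
        have hsub := intermediate_value_Icc' ht₀t₁ (v_cont.continuousOn (s := Icc t₀ t₁))
        have : δ ∈ Icc (v t₁) (v t₀) := by
          rw [hvt₁]; exact ⟨hδ.le, hδ'.le⟩
        exact hsub this
      have hxlt : x < t₁ := by
        refine hxmem.2.lt_of_ne (fun e => ?_)
        rw [e, hvt₁] at hvx
        exact absurd hvx.symm hδ.ne'
      have hxT : x ≤ T := le_trans hxmem.2 ht₁T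
      have hmemIco : ∀ t ∈ Icc t₀ x, t ∈ Ico t₀ t₁ :=
        fun t ht => ⟨ht.1, lt_of_le_of_lt ht.2 hxlt⟩
      have hmem0T : ∀ t ∈ Icc t₀ x, t ∈ Icc (0:ℝ) T :=
        fun t ht => ⟨le_trans ht₀.1 ht.1, le_trans ht.2 hxT⟩
      -- derivative of G
      set G : ℝ → ℝ := fun t => C * t - F (v t) with hG
      have G_deriv : ∀ t ∈ Icc t₀ x, HasDerivAt G (C - (hc (v t))⁻¹ * g t) t := by
        intro t ht
        have hvt : 0 < v t := hvpos t (hmemIco t ht)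
        have d1 : HasDerivAt (fun t => F (v t)) (-(hc (v t))⁻¹ * -g t) t :=
          (F_deriv (v t) hvt).comp t (v_deriv t)
        have d2 : HasDerivAt (fun t => C * t) C t := by
          simpa using (hasDerivAt_id t).const_mul C
        have := d2.sub d1
        exact this.congr_deriv (by ring)
      have G_mono : MonotoneOn G (Icc t₀ x) := by
        apply monotoneOn_of_deriv_nonneg (convex_Icc t₀ x)
        · intro t ht
          exact (G_deriv t ht).continuousAt.continuousWithinAt
        · intro t ht
          rw [interior_Icc] at ht
          exact ((G_deriv t (Ioo_subset_Icc_self ht)).differentiableAt).differentiableWithinAt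
        · intro t ht
          rw [interior_Icc] at ht
          have ht' := Ioo_subset_Icc_self ht
          rw [(G_deriv t ht').deriv]
          have hvt : 0 < v t := hvpos t (hmemIco t ht')
          have h0T := hmem0T t ht'
          have hut : u t ≤ v t := u_le_v t h0T
          have hgle : g t ≤ C * hc (v t) := by
            rw [hg]
            simp only
            rw [uc_eq t h0T]
            exact mul_le_mul_of_nonneg_left (hc_mono hut) hC
          have : (hc (v t))⁻¹ * g t ≤ (hc (v t))⁻¹ * (C * hc (v t)) :=
            mul_le_mul_of_nonneg_left hgle (inv_nonneg.2 (hc_nonneg _))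
          have heq : (hc (v t))⁻¹ * (C * hc (v t)) = C := by
            field_simp
            rw [div_self (hcpos _ hvt).ne']
          rw [heq] at this
          linarith
      have hxx : x ∈ Icc t₀ x := ⟨hxmem.1, le_refl x⟩
      have ht₀x : t₀ ∈ Icc t₀ x := ⟨le_refl t₀, hxmem.1⟩
      have hGle := G_mono ht₀x hxx hxmem.1
      have hFt₀ : F v₀ = 0 := intervalIntegral.integral_same
      rw [hG] at hGle
      simp only at hGle
      rw [hFt₀, hvx] at hGle
      -- F δ ≤ C * (x - t₀) ≤ C * T
      have h1 : F δ ≤ C * (x - t₀) := by linarith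
      have h2 : C * (x - t₀) ≤ C * T := by
        apply mul_le_mul_of_nonneg_left _ hC
        have : 0 ≤ t₀ := ht₀.1
        linarith [hxT]
      calc (∫ z in δ..v₀, (hc z)⁻¹) = F δ := rfl
        _ ≤ C * (x - t₀) := h1
        _ ≤ C * T := h2
    -- final contradiction via monotone convergence
    have hv₀pos : 0 < v₀ := hv₀
    set f : ℝ → ENNReal := fun z => ENNReal.ofReal (hc z)⁻¹ with hf
    have f_meas : Measurable f := (hc_cont.measurable.inv).ennreal_ofReal
    set aseq : ℕ → ℝ := fun n => v₀ / (n + 2) with haseq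
    have haseq_pos : ∀ n, 0 < aseq n := fun n => div_pos hv₀pos (by positivity)
    have haseq_lt : ∀ n, aseq n < v₀ := fun n => by
      rw [haseq]
      simp only
      rw [div_lt_iff₀ (by positivity : (0:ℝ) < (n:ℝ) + 2)]
      nlinarith [hv₀pos]
    have haseq_anti : ∀ m n : ℕ, m ≤ n → aseq n ≤ aseq m := by
      intro m n hmn
      apply div_le_div_of_nonneg_left hv₀pos.le (by positivity)
      have : (m:ℝ) ≤ n := Nat.cast_le.2 hmn
      linarith
    set fn : ℕ → ℝ → ENNReal := fun n => (Ioo (aseq n) v₀).indicator f with hfn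
    have fn_meas : ∀ n, Measurable (fn n) := fun n => f_meas.indicator measurableSet_Ioo
    have fn_mono : Monotone fn := by
      intro m n hmn z
      exact Set.indicator_le_indicator_of_subset
        (Ioo_subset_Ioo_left (haseq_anti m n hmn)) (fun _ => zero_le) z
    have fn_sup : ∀ z, (⨆ n, fn n z) = (Ioo (0:ℝ) v₀).indicator f z := by
      intro z
      by_cases hz : z ∈ Ioo (0:ℝ) v₀
      · obtain ⟨n, hn⟩ : ∃ n : ℕ, aseq n < z := by
          obtain ⟨n, hn⟩ := exists_nat_gt (v₀ / z)
          refine ⟨n, ?_⟩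
          rw [haseq]
          simp only
          rw [div_lt_iff₀ (by positivity : (0:ℝ) < (n:ℝ) + 2)]
          linarith [(div_lt_iff₀ hz.1).1 hn, hz.1]
        apply le_antisymm
        · apply iSup_le
          intro m
          simp only [hfn]
          rw [Set.indicator_of_mem hz]
          by_cases hm : z ∈ Ioo (aseq m) v₀
          · rw [Set.indicator_of_mem hm]
          · rw [Set.indicator_of_notMem hm]; exact zero_le
        · rw [Set.indicator_of_mem hz]
          refine le_iSup_of_le n ?_
          simp only [hfn]
          exact le_of_eq (Set.indicator_of_mem (Set.mem_Ioo.2 ⟨hn, hz.2⟩) f).symm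
      · rw [Set.indicator_of_notMem hz]
        apply le_antisymm _ (zero_le)
        apply iSup_le
        intro m
        have hzm : z ∉ Ioo (aseq m) v₀ := fun hm =>
          hz ⟨(haseq_pos m).trans hm.1, hm.2⟩
        simp only [hfn]
        rw [Set.indicator_of_notMem hzm]
    have bound : ∀ n, (∫⁻ z, fn n z) ≤ ENNReal.ofReal (C * T) := by
      intro n
      rw [hfn]
      simp only
      rw [lintegral_indicator measurableSet_Ioo]
      have hint : IntegrableOn (fun z => (hc z)⁻¹) (Ioo (aseq n) v₀) volume := by
        apply (ContinuousOn.integrableOn_Icc ?_).mono_set Ioo_subset_Icc_self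
        intro z hz
        exact (hinv_contAt z (lt_of_lt_of_le (haseq_pos n) hz.1)).continuousWithinAt
      rw [hf]
      rw [← ofReal_integral_eq_lintegral_ofReal hint
        (Filter.Eventually.of_forall (fun z => inv_nonneg.2 (hc_nonneg z)))]
      apply ENNReal.ofReal_le_ofReal
      have heqI : (∫ z in Ioo (aseq n) v₀, (hc z)⁻¹) = ∫ z in (aseq n)..v₀, (hc z)⁻¹ := by
        rw [intervalIntegral.integral_of_le (haseq_lt n).le, integral_Ioc_eq_integral_Ioo]
      rw [heqI]
      exact key2 (aseq n) (haseq_pos n) (haseq_lt n)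
    have htop : (⊤ : ENNReal) ≤ ENNReal.ofReal (C * T) := by
      have h0 := h_div v₀ hv₀pos
      have hcongr : (∫⁻ z in Ioo (0:ℝ) v₀, ENNReal.ofReal (1 / h z))
          = ∫⁻ z in Ioo (0:ℝ) v₀, f z := by
        apply setLIntegral_congr_fun measurableSet_Ioo
        intro z hz
        rw [hf]
        simp only
        rw [one_div, hc_eq z hz.1.le]
      rw [hcongr] at h0
      rw [← lintegral_indicator measurableSet_Ioo] at h0
      have hmct : (∫⁻ z, (Ioo (0:ℝ) v₀).indicator f z) = ⨆ n, ∫⁻ z, fn n z := by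
        rw [← lintegral_iSup fn_meas fn_mono]
        exact lintegral_congr (fun z => (fn_sup z).symm)
      rw [hmct] at h0
      rw [← h0]
      exact iSup_le bound
    exact absurd htop (not_le.2 ENNReal.ofReal_lt_top)
  intro t ht
  have h1 := u_le_v t ht
  rw [key t ht] at h1
  exact le_antisymm h1 (u_nonneg t ht)
end

section
/- Suppose β > 2, L > 0, T > 0, and ρ : [0,∞) → [0,∞) is a continuous nondecreasing concave function with ρ(0) = 0, ρ(u) > 0 for u > 0, and such that for every ε > 0 the Lebesgue integral ∫_0^ε du/ρ(u^{1/β})^β diverges. Let f : [0,T] × ℝ × ℝ → ℝ satisfy |f(t,y,z) − f(t,y',z')| ≤ ρ(|y−y'|) + L|z−z'| for all t ∈ [0,T] and y, y', z, z' ∈ ℝ. Define μ(u) := 2^{β−1} · ρ(u^{1/β})^β for u ≥ 0 and L' := 2^{β−1} L^β. Then: (i) μ is continuous, nondecreasing and concave on [0,∞) with μ(0) = 0 and μ(u) > 0 for u > 0; (ii) for every ε > 0 the Lebesgue integral ∫_0^ε du/μ(u) diverges; (iii) for all t, y, y', z, z', |f(t,y,z) − f(t,y',z')|^β ≤ μ(|y−y'|^β)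 + L'|z−z'|^β. (That is, a β-order Mao condition of order one, (H1), implies the β-power Mao condition (H1').) -/
open Set MeasureTheory
open scoped NNReal ENNReal

lemma real_add_rpow_le {a b p : ℝ} (ha : 0 ≤ a) (hb : 0 ≤ b) (hp : 1 ≤ p) :
    (a + b) ^ p ≤ 2 ^ (p - 1) * (a ^ p + b ^ p) := by
  lift a to ℝ≥0 using ha
  lift b to ℝ≥0 using hb
  exact_mod_cast NNReal.rpow_add_le_mul_rpow_add_rpow a b hp

lemma affine_rpow_concave {β m c : ℝ} (hβ : 1 < β) (hm : 0 ≤ m) (hc : 0 ≤ c) :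
    ConcaveOn ℝ (Ici (0:ℝ)) (fun u : ℝ => (m * u ^ (1/β) + c) ^ β) := by
  have hβ0 : (0:ℝ) < β := by linarith
  have h1β : (0:ℝ) < 1/β := by positivity
  have hcont : Continuous (fun u : ℝ => (m * u ^ (1/β) + c) ^ β) := by
    have h1 : Continuous (fun u : ℝ => m * u ^ (1/β) + c) := by
      have : Continuous (fun u : ℝ => u ^ (1/β)) :=
        continuous_iff_continuousAt.2 fun x =>
          Real.continuousAt_rpow_const x (1/β) (Or.inr h1β.le)
      fun_prop
    have h2 : Continuous (fun x : ℝ => x ^ β) :=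
      continuous_iff_continuousAt.2 fun x =>
        Real.continuousAt_rpow_const x β (Or.inr hβ0.le)
    exact h2.comp h1
  have hderiv : ∀ u : ℝ, 0 < u → HasDerivAt (fun u : ℝ => (m * u ^ (1/β) + c) ^ β)
      (m * (1/β * u ^ (1/β - 1)) * β * (m * u ^ (1/β) + c) ^ (β - 1)) u := by
    intro u hu
    have h1 : HasDerivAt (fun u : ℝ => m * u ^ (1/β) + c) (m * (1/β * u ^ (1/β - 1))) u :=
      ((Real.hasDerivAt_rpow_const (Or.inl hu.ne')).const_mul m).add_const c
    exact h1.rpow_const (Or.inr hβ.le)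
  have hdsimp : ∀ u : ℝ, 0 < u →
      m * (1/β * u ^ (1/β - 1)) * β * (m * u ^ (1/β) + c) ^ (β - 1)
        = m * (m + c * (u ^ (1/β))⁻¹) ^ (β - 1) := by
    intro u hu
    have hA : (0:ℝ) < u ^ (1/β) := Real.rpow_pos_of_pos hu _
    have e1 : u ^ (1/β - 1) = (u ^ (1/β)) ^ (1 - β) := by
      rw [← Real.rpow_mul hu.le]
      congr 1
      field_simp
    have e2 : (u ^ (1/β)) ^ (1 - β) = ((u ^ (1/β)) ^ (β - 1))⁻¹ := by
      rw [← Real.rpow_neg hA.le]; congr 1; ring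
    have e3 : (m * u ^ (1/β) + c) ^ (β - 1) * ((u ^ (1/β)) ^ (β - 1))⁻¹
        = ((m * u ^ (1/β) + c) / u ^ (1/β)) ^ (β - 1) := by
      rw [Real.div_rpow (by positivity) hA.le]; ring
    have e4 : (m * u ^ (1/β) + c) / u ^ (1/β) = m + c * (u ^ (1/β))⁻¹ := by
      field_simp
    have hβne : β ≠ 0 := hβ0.ne'
    calc m * (1/β * u ^ (1/β - 1)) * β * (m * u ^ (1/β) + c) ^ (β - 1)
        = (β * (1/β)) * m * ((m * u ^ (1/β) + c) ^ (β - 1) * u ^ (1/β - 1)) := by ring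
      _ = m * ((m * u ^ (1/β) + c) ^ (β - 1) * ((u ^ (1/β)) ^ (β - 1))⁻¹) := by
          rw [e1, e2]; field_simp
      _ = m * (m + c * (u ^ (1/β))⁻¹) ^ (β - 1) := by rw [e3, e4]
  have hint : interior (Ici (0:ℝ)) = Ioi 0 := interior_Ici
  refine AntitoneOn.concaveOn_of_deriv (convex_Ici 0) hcont.continuousOn ?_ ?_
  · rw [hint]
    exact fun u hu => ((hderiv u hu).differentiableAt).differentiableWithinAt
  · rw [hint]
    intro u hu v hv huv
    replace hu : (0:ℝ) < u := hu
    replace hv : (0:ℝ) < v := hv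
    rw [(hderiv u hu).deriv, (hderiv v hv).deriv, hdsimp u hu, hdsimp v hv]
    apply mul_le_mul_of_nonneg_left _ hm
    have hvpos : (0:ℝ) < v ^ (1/β) := Real.rpow_pos_of_pos hv _
    have hupos : (0:ℝ) < u ^ (1/β) := Real.rpow_pos_of_pos hu _
    apply Real.rpow_le_rpow (by positivity) _ (by linarith)
    have h2 : (v ^ (1/β))⁻¹ ≤ (u ^ (1/β))⁻¹ := by
      apply inv_anti₀ hupos
      exact Real.rpow_le_rpow hu.le huv h1β.le
    nlinarith

lemma psi_concave {β : ℝ} (hβ : 1 < β) {ρ : ℝ → ℝ}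
    (ρ_nonneg : ∀ x ∈ Ici (0:ℝ), 0 ≤ ρ x)
    (ρ_mono : MonotoneOn ρ (Ici (0:ℝ)))
    (ρ_concave : ConcaveOn ℝ (Ici (0:ℝ)) ρ)
    (ρ_zero : ρ 0 = 0) :
    ConcaveOn ℝ (Ici (0:ℝ)) (fun u : ℝ => (ρ (u ^ (1/β))) ^ β) := by
  have hβ0 : (0:ℝ) < β := by linarith
  have h1β : (0:ℝ) < 1/β := by positivity
  have key : ∀ x ∈ Ici (0:ℝ), ∀ y ∈ Ici (0:ℝ), ∀ a b : ℝ, 0 < a → 0 < b → a + b = 1 →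
      x < y → a * (ρ (x ^ (1/β))) ^ β + b * (ρ (y ^ (1/β))) ^ β
        ≤ (ρ ((a*x + b*y) ^ (1/β))) ^ β := by
    intro x hx y hy a b ha hb hab hxy
    replace hx : (0:ℝ) ≤ x := hx
    set w := a*x + b*y with hwdef
    have hxw : x < w := by nlinarith
    have hwy : w < y := by nlinarith
    have hw0 : 0 < w := lt_of_le_of_lt hx hxw
    set t₁ := x ^ (1/β) with ht₁def
    set s := w ^ (1/β) with hsdef
    set t₂ := y ^ (1/β) with ht₂def
    have ht₁0 : 0 ≤ t₁ := Real.rpow_nonneg hx _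
    have hs0 : (0:ℝ) < s := Real.rpow_pos_of_pos hw0 _
    have ht₂0 : 0 ≤ t₂ := Real.rpow_nonneg (le_trans hx hxy.le) _
    have ht₁s : t₁ < s := Real.rpow_lt_rpow hx hxw h1β
    have hst₂ : s < t₂ := Real.rpow_lt_rpow hw0.le hwy h1β
    set m := (ρ t₂ - ρ s) / (t₂ - s) with hmdef
    set c := ρ s - m * s with hcdef
    have hm : 0 ≤ m :=
      div_nonneg (sub_nonneg.2 (ρ_mono hs0.le ht₂0 hst₂.le)) (sub_nonneg.2 hst₂.le)
    have hts : t₂ - s ≠ 0 := sub_ne_zero.2 hst₂.ne'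
    have hms : m * (t₂ - s) = ρ t₂ - ρ s := by rw [hmdef]; exact div_mul_cancel₀ _ hts
    have hline₂ : m * t₂ + c = ρ t₂ := by rw [hcdef]; linear_combination hms
    have hlinew : m * s + c = ρ s := by rw [hcdef]; ring
    have hslope0 : m ≤ (ρ s - ρ 0) / (s - 0) :=
      ρ_concave.slope_anti_adjacent (le_refl (0:ℝ)) ht₂0 hs0 hst₂
    have hc : 0 ≤ c := by
      rw [ρ_zero, sub_zero, sub_zero] at hslope0
      have := (le_div_iff₀ hs0).1 hslope0
      rw [hcdef]; linarith
    have hslope₁ : m ≤ (ρ s - ρ t₁) / (s - t₁) :=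
      ρ_concave.slope_anti_adjacent ht₁0 ht₂0 ht₁s hst₂
    have hline₁ : ρ t₁ ≤ m * t₁ + c := by
      have := (le_div_iff₀ (by linarith : (0:ℝ) < s - t₁)).1 hslope₁
      rw [hcdef]; nlinarith
    have hgx : (ρ t₁) ^ β ≤ (m * t₁ + c) ^ β :=
      Real.rpow_le_rpow (ρ_nonneg t₁ ht₁0) hline₁ hβ0.le
    have hgy : (ρ t₂) ^ β = (m * t₂ + c) ^ β := by rw [hline₂]
    have hgw : (ρ s) ^ β = (m * s + c) ^ β := by rw [hlinew]
    have hgcc := (affine_rpow_concave hβ hm hc).2 hx (le_trans hx hxy.le : y ∈ Ici (0:ℝ))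
      ha.le hb.le hab
    simp only [smul_eq_mul] at hgcc
    calc a * (ρ t₁) ^ β + b * (ρ t₂) ^ β
        ≤ a * (m * t₁ + c) ^ β + b * (m * t₂ + c) ^ β := by
          rw [hgy]
          exact add_le_add (mul_le_mul_of_nonneg_left hgx ha.le) le_rfl
      _ ≤ (m * (a*x + b*y) ^ (1/β) + c) ^ β := hgcc
      _ = (ρ ((a*x + b*y) ^ (1/β))) ^ β := by rw [hlinew]
  refine ⟨convex_Ici 0, ?_⟩
  intro x hx y hy a b ha hb hab
  simp only [smul_eq_mul]
  rcases eq_or_lt_of_le ha with rfl | ha'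
  · have hb1 : b = 1 := by linarith
    subst hb1; simp
  rcases eq_or_lt_of_le hb with rfl | hb'
  · have ha1 : a = 1 := by linarith
    subst ha1; simp
  rcases lt_trichotomy x y with hxy | rfl | hyx
  · exact key x hx y hy a b ha' hb' hab hxy
  · have e1 : a * x + b * x = x := by linear_combination x * hab
    rw [e1, ← add_mul, hab, one_mul]
  · have h := key y hy x hx b a hb' ha' (by linarith) hyx
    have e : b * y + a * x = a * x + b * y := by ring
    rw [e] at h; linarith


/-- The β-order Mao condition of order one (H1) implies the β-power
Mao condition (H1'): with `μ u := 2^(β-1) * ρ(u^(1/β))^β` and `L' := 2^(β-1) * L^β`,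
the function `μ` is continuous, nondecreasing, concave, vanishes at `0`, is positive
for `u > 0`, has divergent integral `∫_{0+} du/μ(u) = ∞`, and
`|f(t,y,z) - f(t,y',z')|^β ≤ μ(|y-y'|^β) + L' * |z-z'|^β`. -/
theorem stmt4 (β L T : ℝ) (ρ : ℝ → ℝ) (f : ℝ → ℝ → ℝ → ℝ)
    (hβ : 2 < β) (hL : 0 < L) (hT : 0 < T)
    (ρ_nonneg : ∀ x ∈ Ici (0 : ℝ), 0 ≤ ρ x)
    (ρ_cont : ContinuousOn ρ (Ici (0 : ℝ)))
    (ρ_mono : MonotoneOn ρ (Ici (0 : ℝ)))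
    (ρ_concave : ConcaveOn ℝ (Ici (0 : ℝ)) ρ)
    (ρ_zero : ρ 0 = 0)
    (ρ_pos : ∀ u : ℝ, 0 < u → 0 < ρ u)
    (ρ_div : ∀ ε : ℝ, 0 < ε →
      ∫⁻ u in Ioo (0 : ℝ) ε, ENNReal.ofReal (1 / (ρ (u ^ (1 / β))) ^ β) = ⊤)
    (f_mao : ∀ t ∈ Icc (0 : ℝ) T, ∀ y y' z z' : ℝ,
      |f t y z - f t y' z'| ≤ ρ |y - y'| + L * |z - z'|) :
    -- with μ(u) := 2^(β-1) * ρ(u^(1/β))^β and L' := 2^(β-1) * L^β :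
    (ContinuousOn (fun u : ℝ => 2 ^ (β - 1) * (ρ (u ^ (1 / β))) ^ β) (Ici (0 : ℝ)) ∧
      MonotoneOn (fun u : ℝ => 2 ^ (β - 1) * (ρ (u ^ (1 / β))) ^ β) (Ici (0 : ℝ)) ∧
      ConcaveOn ℝ (Ici (0 : ℝ)) (fun u : ℝ => 2 ^ (β - 1) * (ρ (u ^ (1 / β))) ^ β) ∧
      (2 : ℝ) ^ (β - 1) * (ρ ((0 : ℝ) ^ (1 / β))) ^ β = 0 ∧
      (∀ u : ℝ, 0 < u → 0 < 2 ^ (β - 1) * (ρ (u ^ (1 / β))) ^ β)) ∧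
    (∀ ε : ℝ, 0 < ε →
      ∫⁻ u in Ioo (0 : ℝ) ε,
        ENNReal.ofReal (1 / (2 ^ (β - 1) * (ρ (u ^ (1 / β))) ^ β)) = ⊤) ∧
    (∀ t ∈ Icc (0 : ℝ) T, ∀ y y' z z' : ℝ,
      |f t y z - f t y' z'| ^ β ≤
        2 ^ (β - 1) * (ρ ((|y - y'| ^ β) ^ (1 / β))) ^ β
          + (2 ^ (β - 1) * L ^ β) * |z - z'| ^ β) := by
  have hβ1 : (1:ℝ) < β := by linarith
  have hβ0 : (0:ℝ) < β := by linarith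
  have h1β : (0:ℝ) < 1/β := by positivity
  have hc2 : (0:ℝ) < 2 ^ (β - 1) := Real.rpow_pos_of_pos two_pos _
  have cont1 : Continuous (fun u : ℝ => u ^ (1/β)) :=
    continuous_iff_continuousAt.2 fun x => Real.continuousAt_rpow_const x (1/β) (Or.inr h1β.le)
  have cont2 : Continuous (fun x : ℝ => x ^ β) :=
    continuous_iff_continuousAt.2 fun x => Real.continuousAt_rpow_const x β (Or.inr hβ0.le)
  have maps1 : MapsTo (fun u : ℝ => u ^ (1/β)) (Ici 0) (Ici 0) :=
    fun u hu => Real.rpow_nonneg hu _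
  have ψcont : ContinuousOn (fun u : ℝ => (ρ (u ^ (1/β))) ^ β) (Ici 0) :=
    cont2.comp_continuousOn (ρ_cont.comp cont1.continuousOn maps1)
  have ψmono : MonotoneOn (fun u : ℝ => (ρ (u ^ (1/β))) ^ β) (Ici 0) := by
    intro u hu v hv huv
    have hu' : (0:ℝ) ≤ u ^ (1/β) := Real.rpow_nonneg hu _
    have hv' : (0:ℝ) ≤ v ^ (1/β) := Real.rpow_nonneg hv _
    exact Real.rpow_le_rpow (ρ_nonneg _ hu')
      (ρ_mono hu' hv' (Real.rpow_le_rpow hu huv h1β.le)) hβ0.le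
  refine ⟨⟨?_, ?_, ?_, ?_, ?_⟩, ?_, ?_⟩
  · exact continuousOn_const.mul ψcont
  · exact fun u hu v hv huv =>
      mul_le_mul_of_nonneg_left (ψmono hu hv huv) hc2.le
  · have := (psi_concave hβ1 ρ_nonneg ρ_mono ρ_concave ρ_zero).smul hc2.le
    simpa [smul_eq_mul] using this
  · rw [Real.zero_rpow (ne_of_gt h1β), ρ_zero, Real.zero_rpow hβ0.ne', mul_zero]
  · intro u hu
    exact mul_pos hc2 (Real.rpow_pos_of_pos (ρ_pos _ (Real.rpow_pos_of_pos hu _)) _)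
  · intro ε hε
    have key : ∀ u : ℝ, ENNReal.ofReal (1 / (2 ^ (β-1) * (ρ (u ^ (1/β))) ^ β))
        = ENNReal.ofReal ((2 ^ (β-1) : ℝ)⁻¹) * ENNReal.ofReal (1 / (ρ (u ^ (1/β))) ^ β) := by
      intro u
      rw [← ENNReal.ofReal_mul (by positivity)]
      congr 1
      simp [one_div, mul_inv, mul_comm]
    simp_rw [key]
    rw [lintegral_const_mul' _ _ ENNReal.ofReal_ne_top, ρ_div ε hε, ENNReal.mul_top]
    exact (ENNReal.ofReal_pos.2 (by positivity)).ne'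
  · intro t ht y y' z z'
    have h0 := f_mao t ht y y' z z'
    have hA : 0 ≤ ρ |y - y'| := ρ_nonneg _ (mem_Ici.2 (abs_nonneg _))
    have hB : 0 ≤ L * |z - z'| := by positivity
    have h4 : ((|y - y'| ^ β) ^ (1/β)) = |y - y'| := by
      rw [one_div, Real.rpow_rpow_inv (abs_nonneg _) hβ0.ne']
    rw [h4]
    have h1 : |f t y z - f t y' z'| ^ β ≤ (ρ |y - y'| + L * |z - z'|) ^ β :=
      Real.rpow_le_rpow (abs_nonneg _) h0 hβ0.le
    have h2 := real_add_rpow_le hA hB hβ1.le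
    have h3 : (L * |z - z'|) ^ β = L ^ β * |z - z'| ^ β :=
      Real.mul_rpow hL.le (abs_nonneg _)
    calc |f t y z - f t y' z'| ^ β
        ≤ 2 ^ (β - 1) * ((ρ |y - y'|) ^ β + (L * |z - z'|) ^ β) := h1.trans h2
      _ = 2 ^ (β - 1) * (ρ |y - y'|) ^ β + 2 ^ (β - 1) * L ^ β * |z - z'| ^ β := by
          rw [h3]; ring
end

section
/- Let ρ : [0,∞) → [0,∞) be a continuous nondecreasing concave function with ρ(0) = 0 and ρ(u) > 0 for u > 0, and suppose that for some β > 2 and every ε > 0 the Lebesgue integral ∫_0^ε du/ρ(u^{1/β})^β diverges. Then for every α with 2 ≤ α < β, the function ρ̃_α(x) := ρ(x^{1/α})^α is nondecreasing and concave on [0,∞) with ρ̃_α(0) = 0 and ρ̃_α(u) > 0 for u > 0, and for every ε > 0 the Lebesgue integral ∫_0^ε du/ρ̃_α(u) diverges. -/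
open Set MeasureTheory

/-- For concave `ρ` on `[0,∞)` with `ρ 0 = 0`, the ratio `s ↦ ρ s / s` is antitone. -/
lemma aux_ratio {ρ : ℝ → ℝ} (hconc : ConcaveOn ℝ (Ici (0:ℝ)) ρ) (h0 : ρ 0 = 0)
    {s t : ℝ} (hs : 0 < s) (hst : s ≤ t) : s * ρ t ≤ t * ρ s := by
  have ht : 0 < t := hs.trans_le hst
  have h1 : s / t ≤ 1 := div_le_one_of_le₀ hst ht.le
  have := hconc.2 (mem_Ici.2 (le_refl (0:ℝ))) (mem_Ici.2 ht.le)
    (show (0:ℝ) ≤ 1 - s/t by linarith) (show (0:ℝ) ≤ s/t by positivity)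
    (show 1 - s/t + s/t = 1 by ring)
  simp only [smul_eq_mul, mul_zero, h0, zero_add] at this
  rw [div_mul_cancel₀ s ht.ne'] at this
  calc s * ρ t = t * (s / t * ρ t) := by field_simp
    _ ≤ t * ρ s := by nlinarith [this]

/-- Concave function lies above its chords (3-point form). -/
lemma aux_chord {ρ : ℝ → ℝ} (hconc : ConcaveOn ℝ (Ici (0:ℝ)) ρ)
    {u v w : ℝ} (hu : 0 ≤ u) (huw : u ≤ w) (hwv : w ≤ v) (huv : u < v) :
    (v - w) * ρ u + (w - u) * ρ v ≤ (v - u) * ρ w := by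
  have hd : 0 < v - u := by linarith
  have := hconc.2 (mem_Ici.2 hu) (mem_Ici.2 (by linarith : (0:ℝ) ≤ v))
    (show (0:ℝ) ≤ (v - w)/(v - u) from div_nonneg (by linarith) hd.le)
    (show (0:ℝ) ≤ (w - u)/(v - u) from div_nonneg (by linarith) hd.le)
    (show (v - w)/(v - u) + (w - u)/(v - u) = 1 by field_simp; ring)
  simp only [smul_eq_mul] at this
  have he : (v - w)/(v - u) * u + (w - u)/(v - u) * v = w := by field_simp; ring
  rw [he] at this
  calc (v - w) * ρ u + (w - u) * ρ v
      = (v - u) * ((v - w)/(v - u) * ρ u + (w - u)/(v - u) * ρ v) := by field_simp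
    _ ≤ (v - u) * ρ w := by nlinarith [this]

lemma alg_line {ru rv u v w : ℝ} (hd : v - u ≠ 0) :
    ((rv - ru)/(v - u)) * w + (ru * v - rv * u)/(v - u)
      = ((v - w) * ru + (w - u) * rv)/(v - u) := by
  field_simp; ring

/-- Concavity of `z ↦ (m z^(1/α) + k)^α` on `[0,∞)` for `m, k ≥ 0`, `α > 1`. -/
lemma aux_h_concave (α m k : ℝ) (hα : 1 < α) (hm : 0 ≤ m) (hk : 0 ≤ k) :
    ConcaveOn ℝ (Ici (0:ℝ)) (fun z : ℝ => (m * z ^ (1/α) + k) ^ α) := by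
  have hα0 : (0:ℝ) < α := by linarith
  have hia : (0:ℝ) < 1/α := by positivity
  rcases eq_or_lt_of_le hm with hm0 | hm0
  · simp only [← hm0, zero_mul, zero_add]
    exact concaveOn_const _ (convex_Ici 0)
  -- m > 0
  have hderiv : ∀ z ∈ Ioi (0:ℝ), HasDerivAt (fun z : ℝ => (m * z ^ (1/α) + k) ^ α)
      (m * (m + k * z ^ (-(1/α))) ^ (α - 1)) z := by
    intro z hz
    have hz0 : (0:ℝ) < z := hz
    have h1 : HasDerivAt (fun z : ℝ => m * z ^ (1/α) + k)
        (m * ((1/α) * z ^ (1/α - 1))) z :=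
      ((Real.hasDerivAt_rpow_const (Or.inl hz0.ne')).const_mul m).add_const k
    have hbase : 0 < m * z ^ (1/α) + k := by
      have := Real.rpow_pos_of_pos hz0 (1/α)
      nlinarith
    have h2 := h1.rpow_const (p := α) (Or.inl hbase.ne')
    convert h2 using 1
    have hkey : (m + k * z ^ (-(1/α))) ^ (α - 1)
        = (m * z ^ (1/α) + k) ^ (α - 1) * z ^ (1/α - 1) := by
      have e1 : m + k * z ^ (-(1/α)) = (m * z ^ (1/α) + k) * z ^ (-(1/α)) := by
        rw [add_mul, mul_assoc, ← Real.rpow_add hz0]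
        simp
      have e2 : (z ^ (-(1/α))) ^ (α - 1) = z ^ (1/α - 1) := by
        rw [← Real.rpow_mul hz0.le]
        congr 1
        field_simp
        ring
      rw [e1, Real.mul_rpow hbase.le (Real.rpow_nonneg hz0.le _), e2]
    rw [hkey]
    field_simp
  have hcont : ContinuousOn (fun z : ℝ => (m * z ^ (1/α) + k) ^ α) (Ici (0:ℝ)) := by
    apply Continuous.continuousOn
    rw [continuous_iff_continuousAt]
    intro z
    have h1 : ContinuousAt (fun z : ℝ => m * z ^ (1/α) + k) z := by
      apply ContinuousAt.add _ continuousAt_const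
      exact (continuousAt_id.rpow_const (Or.inr hia.le)).const_mul m
    exact h1.rpow_const (Or.inr hα0.le)
  have hdiff : DifferentiableOn ℝ (fun z : ℝ => (m * z ^ (1/α) + k) ^ α)
      (interior (Ici (0:ℝ))) := by
    rw [interior_Ici]
    exact fun z hz => ((hderiv z hz).differentiableAt).differentiableWithinAt
  apply AntitoneOn.concaveOn_of_deriv (convex_Ici 0) hcont hdiff
  rw [interior_Ici]
  intro z1 hz1 z2 hz2 h12
  rw [(hderiv z1 hz1).deriv, (hderiv z2 hz2).deriv]
  have hz10 : (0:ℝ) < z1 := hz1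
  have hz20 : (0:ℝ) < z2 := hz2
  apply mul_le_mul_of_nonneg_left _ hm
  apply Real.rpow_le_rpow (by positivity) _ (by linarith)
  apply add_le_add (le_refl m)
  apply mul_le_mul_of_nonneg_left _ hk
  rw [Real.rpow_neg hz10.le, Real.rpow_neg hz20.le]
  exact inv_anti₀ (Real.rpow_pos_of_pos hz10 _) (Real.rpow_le_rpow hz10.le h12 hia.le)

/-- Concavity of `x ↦ ρ(x^(1/α))^α`. -/
lemma aux_g_concave (α : ℝ) (hα : 1 < α) {ρ : ℝ → ℝ}
    (ρ_nonneg : ∀ x ∈ Ici (0:ℝ), 0 ≤ ρ x)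
    (ρ_mono : MonotoneOn ρ (Ici (0:ℝ)))
    (ρ_concave : ConcaveOn ℝ (Ici (0:ℝ)) ρ)
    (ρ_zero : ρ 0 = 0) :
    ConcaveOn ℝ (Ici (0:ℝ)) (fun x : ℝ => (ρ (x ^ (1/α))) ^ α) := by
  have hα0 : (0:ℝ) < α := by linarith
  have hia : (0:ℝ) < 1/α := by positivity
  have key : ∀ x y a b : ℝ, 0 ≤ x → 0 ≤ y → x ≤ y → 0 ≤ a → 0 ≤ b → a + b = 1 →
      a * (ρ (x ^ (1/α))) ^ α + b * (ρ (y ^ (1/α))) ^ α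
        ≤ (ρ ((a * x + b * y) ^ (1/α))) ^ α := by
    intro x y a b hx hy hxy ha hb hab
    rcases eq_or_lt_of_le hxy with heq | hlt
    · subst heq
      have h1 : a * x + b * x = x := by rw [← add_mul, hab, one_mul]
      rw [h1, ← add_mul, hab, one_mul]
    have hu0 : 0 ≤ x ^ (1/α) := Real.rpow_nonneg hx _
    have huv : x ^ (1/α) < y ^ (1/α) := Real.rpow_lt_rpow hx hlt hia
    set u := x ^ (1/α) with hu_def
    set v := y ^ (1/α) with hv_def
    have hv0 : 0 < v := lt_of_le_of_lt hu0 huv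
    have hρu : 0 ≤ ρ u := ρ_nonneg u hu0
    have hρuv : ρ u ≤ ρ v := ρ_mono hu0 hv0.le huv.le
    have hd : 0 < v - u := by linarith
    set m := (ρ v - ρ u)/(v - u) with hm_def
    set k := (ρ u * v - ρ v * u)/(v - u) with hk_def
    have hm : 0 ≤ m := div_nonneg (by linarith) hd.le
    have hk : 0 ≤ k := by
      rcases eq_or_lt_of_le hu0 with h0u | h0u
      · have hu0' : u = 0 := h0u.symm
        have : ρ u = 0 := by rw [hu0', ρ_zero]
        rw [hk_def, this, hu0']
        simp
      · exact div_nonneg (by nlinarith [aux_ratio ρ_concave ρ_zero h0u huv.le]) hd.le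
    have hmu : m * u + k = ρ u := by
      rw [hm_def, hk_def, alg_line hd.ne', sub_self, zero_mul, add_zero,
        mul_comm, mul_div_assoc, div_self hd.ne', mul_one]
    have hmv : m * v + k = ρ v := by
      rw [hm_def, hk_def, alg_line hd.ne', sub_self, zero_mul, zero_add,
        mul_comm, mul_div_assoc, div_self hd.ne', mul_one]
    set c := a * x + b * y with hc_def
    have hxc : x ≤ c := by nlinarith
    have hcy : c ≤ y := by nlinarith
    have hc0 : 0 ≤ c := le_trans hx hxc
    set w := c ^ (1/α) with hw_def
    have huw : u ≤ w := Real.rpow_le_rpow hx hxc hia.le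
    have hwv : w ≤ v := Real.rpow_le_rpow hc0 hcy hia.le
    have hlw : m * w + k ≤ ρ w := by
      have hch := aux_chord ρ_concave hu0 huw hwv huv
      have he : m * w + k = ((v - w) * ρ u + (w - u) * ρ v)/(v - u) := by
        rw [hm_def, hk_def, alg_line hd.ne']
      rw [he, div_le_iff₀ hd]
      nlinarith
    have hlw0 : 0 ≤ m * w + k := by nlinarith
    have hcon := (aux_h_concave α m k hα hm hk).2 (mem_Ici.2 hx) (mem_Ici.2 hy) ha hb hab
    simp only [smul_eq_mul] at hcon
    rw [← hu_def, ← hv_def, ← hc_def, ← hw_def, hmu, hmv] at hcon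
    calc a * ρ u ^ α + b * ρ v ^ α ≤ (m * w + k) ^ α := hcon
      _ ≤ ρ w ^ α := Real.rpow_le_rpow hlw0 hlw hα0.le
  constructor
  · exact convex_Ici 0
  intro x hx y hy a b ha hb hab
  simp only [smul_eq_mul]
  rcases le_total x y with h | h
  · exact key x y a b hx hy h ha hb hab
  · have := key y x b a hy hx h hb ha (by linarith)
    calc a * ρ (x ^ (1/α)) ^ α + b * ρ (y ^ (1/α)) ^ α
        = b * ρ (y ^ (1/α)) ^ α + a * ρ (x ^ (1/α)) ^ α := by ring
      _ ≤ ρ ((b * y + a * x) ^ (1/α)) ^ α := this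
      _ = ρ ((a * x + b * y) ^ (1/α)) ^ α := by rw [add_comm]

lemma aux_lintegral_image {s : Set ℝ} {f f' : ℝ → ℝ} (hs : MeasurableSet s)
    (hf' : ∀ x ∈ s, HasDerivWithinAt f (f' x) s x) (hf : InjOn f s) (g : ℝ → ENNReal) :
    ∫⁻ x in f '' s, g x = ∫⁻ x in s, ENNReal.ofReal |f' x| * g (f x) := by
  simpa only [ContinuousLinearMap.det_toSpanSingleton] using
    lintegral_image_eq_lintegral_abs_det_fderiv_mul volume hs
      (fun x hx => (hf' x hx).hasFDerivWithinAt) hf g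

/-- Substitution `u = t^γ` : `∫_{(0,δ^γ)} F = ∫_{(0,δ)} γ t^{γ-1} F(t^γ)`. -/
lemma aux_subst (γ δ : ℝ) (hγ : 1 ≤ γ) (hδ : 0 < δ) (F : ℝ → ENNReal) :
    ∫⁻ u in Ioo (0:ℝ) (δ ^ γ), F u
      = ∫⁻ t in Ioo (0:ℝ) δ, ENNReal.ofReal (γ * t ^ (γ - 1)) * F (t ^ γ) := by
  have hγ0 : (0:ℝ) < γ := by linarith
  have himg : (fun t : ℝ => t ^ γ) '' (Ioo 0 δ) = Ioo 0 (δ ^ γ) := by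
    ext u
    constructor
    · rintro ⟨t, ⟨ht0, htδ⟩, rfl⟩
      exact ⟨Real.rpow_pos_of_pos ht0 _, Real.rpow_lt_rpow ht0.le htδ hγ0⟩
    · rintro ⟨hu0, huδ⟩
      refine ⟨u ^ γ⁻¹, ⟨Real.rpow_pos_of_pos hu0 _, ?_⟩, Real.rpow_inv_rpow hu0.le hγ0.ne'⟩
      calc u ^ γ⁻¹ < (δ ^ γ) ^ γ⁻¹ := Real.rpow_lt_rpow hu0.le huδ (by positivity)
        _ = δ := Real.rpow_rpow_inv hδ.le hγ0.ne'
  have hder : ∀ t ∈ Ioo (0:ℝ) δ, HasDerivWithinAt (fun t : ℝ => t ^ γ)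
      (γ * t ^ (γ - 1)) (Ioo (0:ℝ) δ) t := fun t ht =>
    (Real.hasDerivAt_rpow_const (Or.inl ht.1.ne')).hasDerivWithinAt
  have hinj : InjOn (fun t : ℝ => t ^ γ) (Ioo (0:ℝ) δ) := by
    intro a ha b hb hab
    by_contra hne
    rcases lt_or_gt_of_ne hne with h | h
    · exact absurd hab (Real.rpow_lt_rpow ha.1.le h hγ0).ne
    · exact absurd hab.symm (Real.rpow_lt_rpow hb.1.le h hγ0).ne
  rw [← himg, aux_lintegral_image measurableSet_Ioo hder hinj F]
  refine setLIntegral_congr_fun measurableSet_Ioo ?_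
  intro t ht
  beta_reduce
  rw [abs_of_nonneg (mul_nonneg hγ0.le (Real.rpow_nonneg ht.1.le _))]

lemma aux_ptwise {α β c t R : ℝ} (hα : 0 < α) (hβ : 0 < β) (hab : α ≤ β)
    (ht : 0 < t) (hR : 0 < R) (hc : 0 ≤ c) (hct : c * t ≤ R) :
    α/β * c^(β-α) * (β * t^(β-1) * (1/R^β)) ≤ α * t^(α-1) * (1/R^α) := by
  have key : c^(β-α) * t^(β-α) ≤ R^(β-α) := by
    rw [← Real.mul_rpow hc ht.le]
    exact Real.rpow_le_rpow (by positivity) hct (by linarith)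
  have e1 : t^(β-1) = t^(α-1) * t^(β-α) := by
    rw [← Real.rpow_add ht]; ring_nf
  have e2 : R^β = R^α * R^(β-α) := by
    rw [← Real.rpow_add hR]; ring_nf
  have hRα : (0:ℝ) < R^α := Real.rpow_pos_of_pos hR _
  have hRβα : (0:ℝ) < R^(β-α) := Real.rpow_pos_of_pos hR _
  have htα : (0:ℝ) < t^(α-1) := Real.rpow_pos_of_pos ht _
  have htβα : (0:ℝ) < t^(β-α) := Real.rpow_pos_of_pos ht _
  have hcβα : (0:ℝ) ≤ c^(β-α) := Real.rpow_nonneg hc _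
  have hA : (0:ℝ) ≤ α * t^(α-1) * (1/R^α) := by positivity
  calc α/β * c^(β-α) * (β * t^(β-1) * (1/R^β))
      = (α * t^(α-1) * (1/R^α)) * ((c^(β-α) * t^(β-α))/R^(β-α)) := by
        rw [e1, e2]; field_simp
    _ ≤ (α * t^(α-1) * (1/R^α)) * 1 := by
        apply mul_le_mul_of_nonneg_left _ hA
        exact (div_le_one hRβα).2 key
    _ = α * t^(α-1) * (1/R^α) := mul_one _

/-- Transfer of divergence of the integral from exponent `β` to exponent `α ≤ β`. -/
lemma aux_div (α β : ℝ) (ρ : ℝ → ℝ) (hα1 : 1 ≤ α) (hαβ : α < β)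
    (ρ_concave : ConcaveOn ℝ (Ici (0:ℝ)) ρ) (ρ_zero : ρ 0 = 0)
    (ρ_pos : ∀ u : ℝ, 0 < u → 0 < ρ u)
    (ρ_div : ∀ ε : ℝ, 0 < ε →
      ∫⁻ u in Ioo (0:ℝ) ε, ENNReal.ofReal (1 / (ρ (u ^ (1 / β))) ^ β) = ⊤)
    (ε : ℝ) (hε : 0 < ε) :
    ∫⁻ u in Ioo (0:ℝ) ε, ENNReal.ofReal (1 / (ρ (u ^ (1 / α))) ^ α) = ⊤ := by
  have hα0 : (0:ℝ) < α := by linarith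
  have hβ0 : (0:ℝ) < β := by linarith
  have hβ1 : (1:ℝ) ≤ β := by linarith
  obtain ⟨δ, hδ, hεδ⟩ : ∃ δ : ℝ, 0 < δ ∧ δ ^ α = ε :=
    ⟨ε ^ (1/α), Real.rpow_pos_of_pos hε _, by
      rw [one_div, Real.rpow_inv_rpow hε.le hα0.ne']⟩
  have hρδ : 0 < ρ δ := ρ_pos δ hδ
  set cc := ρ δ / δ with hc_def
  have hc : 0 < cc := div_pos hρδ hδ
  have hKpos : 0 < α/β * cc^(β-α) := by positivity
  have hK0 : ENNReal.ofReal (α/β * cc^(β-α)) ≠ 0 := by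
    simp [ENNReal.ofReal_eq_zero, not_le, hKpos]
  have hβdiv : ∫⁻ t in Ioo (0:ℝ) δ, ENNReal.ofReal (β * t^(β-1)) *
      ENNReal.ofReal (1 / (ρ ((t^β) ^ (1/β))) ^ β) = ⊤ := by
    rw [← aux_subst β δ hβ1 hδ (fun u => ENNReal.ofReal (1 / (ρ (u ^ (1/β))) ^ β))]
    exact ρ_div (δ^β) (Real.rpow_pos_of_pos hδ _)
  rw [← hεδ, aux_subst α δ hα1 hδ (fun u => ENNReal.ofReal (1 / (ρ (u ^ (1/α))) ^ α))]
  rw [eq_top_iff]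
  calc (⊤:ENNReal) = ENNReal.ofReal (α/β * cc^(β-α)) *
        ∫⁻ t in Ioo (0:ℝ) δ, ENNReal.ofReal (β * t^(β-1)) *
          ENNReal.ofReal (1 / (ρ ((t^β) ^ (1/β))) ^ β) := by
        rw [hβdiv, ENNReal.mul_top hK0]
    _ = ∫⁻ t in Ioo (0:ℝ) δ, ENNReal.ofReal (α/β * cc^(β-α)) *
          (ENNReal.ofReal (β * t^(β-1)) *
            ENNReal.ofReal (1 / (ρ ((t^β) ^ (1/β))) ^ β)) :=
        (lintegral_const_mul' _ _ ENNReal.ofReal_ne_top).symm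
    _ ≤ ∫⁻ t in Ioo (0:ℝ) δ, ENNReal.ofReal (α * t^(α-1)) *
          ENNReal.ofReal (1 / (ρ ((t^α) ^ (1/α))) ^ α) := by
        apply setLIntegral_mono' measurableSet_Ioo
        intro t ht
        have ht0 : 0 < t := ht.1
        have htβ : (t^β) ^ (1/β) = t := by
          rw [one_div, Real.rpow_rpow_inv ht0.le hβ0.ne']
        have htα : (t^α) ^ (1/α) = t := by
          rw [one_div, Real.rpow_rpow_inv ht0.le hα0.ne']
        rw [htβ, htα]
        have hR : 0 < ρ t := ρ_pos t ht0
        have hct : cc * t ≤ ρ t := by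
          have hra := aux_ratio ρ_concave ρ_zero ht0 ht.2.le
          rw [hc_def, div_mul_eq_mul_div, div_le_iff₀ hδ]
          nlinarith
        have hineq := aux_ptwise hα0 hβ0 hαβ.le ht0 hR hc.le hct
        have hB : (0:ℝ) ≤ β * t^(β-1) :=
          mul_nonneg hβ0.le (Real.rpow_nonneg ht0.le _)
        have hA : (0:ℝ) ≤ α * t^(α-1) :=
          mul_nonneg hα0.le (Real.rpow_nonneg ht0.le _)
        rw [← ENNReal.ofReal_mul hB, ← ENNReal.ofReal_mul hKpos.le,
          ← ENNReal.ofReal_mul hA]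
        apply ENNReal.ofReal_le_ofReal
        calc α/β * cc^(β-α) * (β * t^(β-1) * (1 / (ρ t) ^ β))
            ≤ α * t^(α-1) * (1 / (ρ t) ^ α) := hineq
          _ = α * t^(α-1) * (1 / (ρ t) ^ α) := rfl

/-- If `ρ : [0,∞) → [0,∞)` is continuous, nondecreasing, concave,
`ρ 0 = 0`, `ρ u > 0` for `u > 0`, and `∫_{0+} du / ρ(u^(1/β))^β = ∞` for some `β > 2`,
then for every `2 ≤ α < β`, `ρ̃_α(x) := ρ(x^(1/α))^α` is nondecreasing and concave on
`[0,∞)`, vanishes at `0`, is positive for `u > 0`, and `∫_{0+} du / ρ̃_α(u) = ∞`. -/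
theorem stmt7 (β : ℝ) (ρ : ℝ → ℝ)
    (hβ : 2 < β)
    (ρ_nonneg : ∀ x ∈ Ici (0 : ℝ), 0 ≤ ρ x)
    (ρ_cont : ContinuousOn ρ (Ici (0 : ℝ)))
    (ρ_mono : MonotoneOn ρ (Ici (0 : ℝ)))
    (ρ_concave : ConcaveOn ℝ (Ici (0 : ℝ)) ρ)
    (ρ_zero : ρ 0 = 0)
    (ρ_pos : ∀ u : ℝ, 0 < u → 0 < ρ u)
    (ρ_div : ∀ ε : ℝ, 0 < ε →
      ∫⁻ u in Ioo (0 : ℝ) ε, ENNReal.ofReal (1 / (ρ (u ^ (1 / β))) ^ β) = ⊤) :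
    ∀ α : ℝ, 2 ≤ α → α < β →
      MonotoneOn (fun x : ℝ => (ρ (x ^ (1 / α))) ^ α) (Ici (0 : ℝ)) ∧
      ConcaveOn ℝ (Ici (0 : ℝ)) (fun x : ℝ => (ρ (x ^ (1 / α))) ^ α) ∧
      (ρ ((0 : ℝ) ^ (1 / α))) ^ α = 0 ∧
      (∀ u : ℝ, 0 < u → 0 < (ρ (u ^ (1 / α))) ^ α) ∧
      (∀ ε : ℝ, 0 < ε →
        ∫⁻ u in Ioo (0 : ℝ) ε, ENNReal.ofReal (1 / (ρ (u ^ (1 / α))) ^ α) = ⊤) := by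
  intro α hα2 hαβ
  have hα0 : (0:ℝ) < α := by linarith
  have hia : (0:ℝ) < 1/α := by positivity
  refine ⟨?_, ?_, ?_, ?_, ?_⟩
  · -- monotone
    intro x hx y hy hxy
    have h1 : x ^ (1/α) ≤ y ^ (1/α) := Real.rpow_le_rpow hx hxy hia.le
    have h2 : (0:ℝ) ≤ x ^ (1/α) := Real.rpow_nonneg hx _
    have h3 : (0:ℝ) ≤ y ^ (1/α) := Real.rpow_nonneg hy _
    exact Real.rpow_le_rpow (ρ_nonneg _ h2) (ρ_mono h2 h3 h1) hα0.le
  · exact aux_g_concave α (by linarith) ρ_nonneg ρ_mono ρ_concave ρ_zero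
  · rw [Real.zero_rpow hia.ne', ρ_zero, Real.zero_rpow hα0.ne']
  · intro u hu
    exact Real.rpow_pos_of_pos (ρ_pos _ (Real.rpow_pos_of_pos hu _)) _
  · exact aux_div α β ρ (by linarith) hαβ ρ_concave ρ_zero ρ_pos ρ_div
end

section
/- Bihari inequality for bounded measurable functions: let T > 0, C ≥ 0, and let h : [0,∞) → [0,∞) be a continuous nondecreasing function with h(0) = 0 such that for every ε > 0 the Lebesgue integral ∫_0^ε du/h(u) diverges. Let v : [0,T] → [0,∞) be a bounded measurable function satisfying v(t) ≤ C ∫_t^T h(v(s)) ds for every t ∈ [0,T]. Then v(t) = 0 for all t ∈ [0,T]. -/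
open Set MeasureTheory intervalIntegral

/-- Bihari inequality for bounded measurable functions: if `h` is
continuous, nondecreasing, `h 0 = 0`, `∫_{0+} du / h u = ∞`, and the bounded
measurable function `v : [0,T] → [0,∞)` satisfies `v t ≤ C ∫_t^T h (v s) ds`,
then `v ≡ 0` on `[0,T]`. -/
theorem stmt9 (T C : ℝ) (h : ℝ → ℝ) (v : ℝ → ℝ)
    (hT : 0 < T) (hC : 0 ≤ C)
    (h_nonneg : ∀ x ∈ Ici (0 : ℝ), 0 ≤ h x)
    (h_cont : ContinuousOn h (Ici (0 : ℝ)))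
    (h_mono : MonotoneOn h (Ici (0 : ℝ)))
    (h_zero : h 0 = 0)
    (h_div : ∀ ε : ℝ, 0 < ε →
      ∫⁻ x in Ioo (0 : ℝ) ε, ENNReal.ofReal (1 / h x) = ⊤)
    (v_meas : Measurable v)
    (v_nonneg : ∀ t ∈ Icc (0 : ℝ) T, 0 ≤ v t)
    (v_bdd : ∃ M : ℝ, ∀ t ∈ Icc (0 : ℝ) T, v t ≤ M)
    (v_bound : ∀ t ∈ Icc (0 : ℝ) T, v t ≤ C * ∫ s in t..T, h (v s)) :
    ∀ t ∈ Icc (0 : ℝ) T, v t = 0 := by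
  classical
  -- h is positive on (0, ∞)
  have h_pos : ∀ x : ℝ, 0 < x → 0 < h x := by
    intro x hx
    rcases (h_nonneg x hx.le).lt_or_eq with hp | hp
    · exact hp
    · exfalso
      have hzero : ∫⁻ y in Ioo (0:ℝ) x, ENNReal.ofReal (1 / h y) = 0 := by
        have hpt : ∀ y ∈ Ioo (0:ℝ) x, ENNReal.ofReal (1 / h y) = (0:ENNReal) := by
          intro y hy
          have hy0 : (0:ℝ) ≤ y := hy.1.le
          have : h y = 0 := le_antisymm (by
            have := h_mono hy0 hx.le hy.2.le
            linarith) (h_nonneg y hy0)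
          simp [this]
        rw [setLIntegral_congr_fun measurableSet_Ioo hpt]
        simp
      rw [h_div x hx] at hzero
      exact ENNReal.top_ne_zero hzero
  obtain ⟨M, hM⟩ := v_bdd
  set g : ℝ → ℝ := fun s => h (max (v s) 0) with hg_def
  have g_meas : Measurable g := by
    have : Continuous fun x : ℝ => h (max x 0) :=
      h_cont.comp_continuous (continuous_id.max continuous_const)
        (fun x => mem_Ici.2 (le_max_right _ _))
    exact this.measurable.comp v_meas
  have g_nonneg : ∀ s, 0 ≤ g s := fun s => h_nonneg _ (mem_Ici.2 (le_max_right _ _))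
  have g_eq : ∀ s ∈ Icc (0:ℝ) T, g s = h (v s) := by
    intro s hs
    simp [hg_def, max_eq_left (v_nonneg s hs)]
  have g_int : IntegrableOn g (Icc (0:ℝ) T) := by
    refine Integrable.mono' (integrable_const (h (max M 0)))
      g_meas.aestronglyMeasurable ?_
    filter_upwards [ae_restrict_mem measurableSet_Icc] with s hs
    rw [Real.norm_eq_abs, abs_of_nonneg (g_nonneg s)]
    rw [g_eq s hs]
    exact h_mono (v_nonneg s hs) (le_max_right M 0)
      ((hM s hs).trans (le_max_left M 0))
  have g_ii : ∀ t t', t ∈ Icc (0:ℝ) T → t' ∈ Icc (0:ℝ) T →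
      IntervalIntegrable g volume t t' := by
    intro t t' ht ht'
    exact (g_int.mono_set (uIcc_subset_Icc ht ht')).intervalIntegrable
  set W : ℝ → ℝ := fun t => C * ∫ s in t..T, g s with hW_def
  have hvW : ∀ t ∈ Icc (0:ℝ) T, v t ≤ W t := by
    intro t ht
    have hcongr : (∫ s in t..T, h (v s)) = ∫ s in t..T, g s := by
      refine intervalIntegral.integral_congr ?_
      intro s hs
      rw [uIcc_of_le ht.2] at hs
      exact (g_eq s ⟨ht.1.trans hs.1, hs.2⟩).symm
    have := v_bound t ht
    rw [hcongr] at this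
    exact this
  have hW_nonneg : ∀ t ∈ Icc (0:ℝ) T, 0 ≤ W t := by
    intro t ht
    exact mul_nonneg hC (intervalIntegral.integral_nonneg ht.2 fun u _ => g_nonneg u)
  have hW_sub : ∀ t t', 0 ≤ t → t ≤ t' → t' ≤ T →
      W t - W t' = C * ∫ s in t..t', g s := by
    intro t t' h0 htt' hT'
    have ht : t ∈ Icc (0:ℝ) T := ⟨h0, htt'.trans hT'⟩
    have ht' : t' ∈ Icc (0:ℝ) T := ⟨h0.trans htt', hT'⟩
    have hTm : (T:ℝ) ∈ Icc (0:ℝ) T := ⟨hT.le, le_refl T⟩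
    have hadd := intervalIntegral.integral_add_adjacent_intervals
      (g_ii t t' ht ht') (g_ii t' T ht' hTm)
    simp only [hW_def]
    rw [← hadd]
    ring
  have hW_anti : ∀ t t', 0 ≤ t → t ≤ t' → t' ≤ T → W t' ≤ W t := by
    intro t t' h0 htt' hT'
    have hsub := hW_sub t t' h0 htt' hT'
    have hnn : 0 ≤ C * ∫ s in t..t', g s :=
      mul_nonneg hC (intervalIntegral.integral_nonneg htt' fun u _ => g_nonneg u)
    linarith
  have key : ∀ t t', 0 ≤ t → t ≤ t' → t' ≤ T →
      W t - W t' ≤ C * ((t' - t) * h (W t)) := by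
    intro t t' h0 htt' hT'
    rw [hW_sub t t' h0 htt' hT']
    have ht : t ∈ Icc (0:ℝ) T := ⟨h0, htt'.trans hT'⟩
    have ht' : t' ∈ Icc (0:ℝ) T := ⟨h0.trans htt', hT'⟩
    refine mul_le_mul_of_nonneg_left ?_ hC
    have hint : (∫ s in t..t', g s) ≤ ∫ s in t..t', h (W t) := by
      refine intervalIntegral.integral_mono_on htt' (g_ii t t' ht ht')
        intervalIntegrable_const ?_
      intro s hs
      have hs' : s ∈ Icc (0:ℝ) T := ⟨h0.trans hs.1, hs.2.trans hT'⟩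
      rw [g_eq s hs']
      have h2 : h (v s) ≤ h (W s) :=
        h_mono (v_nonneg s hs') (hW_nonneg s hs') (hvW s hs')
      have h3 : h (W s) ≤ h (W t) :=
        h_mono (hW_nonneg s hs') (hW_nonneg t ht) (hW_anti t s h0 hs.1 hs'.2)
      linarith
    rw [intervalIntegral.integral_const, smul_eq_mul] at hint
    exact hint
  have hWT : W T = 0 := by simp [hW_def]
  have hW_cont : ContinuousOn W (Icc (0:ℝ) T) := by
    have hprim : ContinuousOn (fun t => ∫ s in Ioc (0:ℝ) t, g s) (Icc (0:ℝ) T) :=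
      intervalIntegral.continuousOn_primitive g_int
    have haux : ContinuousOn
        (fun t => C * ((∫ s in (0:ℝ)..T, g s) - ∫ s in Ioc (0:ℝ) t, g s))
        (Icc (0:ℝ) T) :=
      continuousOn_const.mul (continuousOn_const.sub hprim)
    refine haux.congr ?_
    intro t ht
    have hTm : (T:ℝ) ∈ Icc (0:ℝ) T := ⟨hT.le, le_refl T⟩
    have h0m : (0:ℝ) ∈ Icc (0:ℝ) T := ⟨le_refl 0, hT.le⟩
    have hadd := intervalIntegral.integral_add_adjacent_intervals
      (g_ii 0 t h0m ht) (g_ii t T ht hTm)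
    have h2 : (∫ s in Ioc (0:ℝ) t, g s) = ∫ s in (0:ℝ)..t, g s :=
      (intervalIntegral.integral_of_le ht.1).symm
    simp only [hW_def]
    rw [h2, ← hadd]
    ring
  have hφ_cont : ContinuousOn (fun t => h (W t)) (Icc (0:ℝ) T) :=
    h_cont.comp hW_cont (fun t ht => hW_nonneg t ht)
  -- main argument
  intro t0 ht0
  refine le_antisymm ?_ (v_nonneg t0 ht0)
  by_contra hne
  push_neg at hne
  have hv0 : 0 < v t0 := hne
  set a := W t0 with ha_def
  have ha : 0 < a := hv0.trans_le (hvW t0 ht0)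
  have hha : 0 < h a := h_pos a ha
  have ivt : ∀ r ∈ Icc (0:ℝ) T, ∃ t, t ∈ Icc r T ∧ h (W t) = h (W r) / 2 := by
    intro r hr
    have hc : ContinuousOn (fun t => h (W t)) (Icc r T) :=
      hφ_cont.mono (Icc_subset_Icc hr.1 le_rfl)
    have hWr0 : 0 ≤ h (W r) := h_nonneg _ (hW_nonneg r hr)
    have hmem : h (W r) / 2 ∈ Icc (h (W T)) (h (W r)) := by
      rw [hWT, h_zero]
      constructor <;> linarith
    obtain ⟨t, htmem, hteq⟩ := intermediate_value_Icc' hr.2 hc hmem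
    exact ⟨t, htmem, hteq⟩
  let next : ℝ → ℝ := fun r => if hr : r ∈ Icc (0:ℝ) T then (ivt r hr).choose else T
  let seq : ℕ → ℝ := fun k => Nat.rec t0 (fun _ r => next r) k
  have seq_zero : seq 0 = t0 := rfl
  have seq_succ : ∀ k, seq (k+1) = next (seq k) := fun _ => rfl
  have next_def : ∀ r (hr : r ∈ Icc (0:ℝ) T), next r = (ivt r hr).choose :=
    fun r hr => dif_pos hr
  have inv : ∀ k : ℕ, seq k ∈ Icc (0:ℝ) T ∧ seq k ≤ seq (k+1) ∧
      seq (k+1) ∈ Icc (seq k) T ∧ h (W (seq k)) = h a / 2^k := by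
    have step : ∀ r, r ∈ Icc (0:ℝ) T → next r ∈ Icc r T ∧
        h (W (next r)) = h (W r) / 2 := by
      intro r hr
      rw [next_def r hr]
      exact (ivt r hr).choose_spec
    intro k
    induction k with
    | zero =>
      obtain ⟨hmem, _⟩ := step t0 ht0
      rw [seq_zero]
      refine ⟨ht0, ?_, ?_, by simp [ha_def]⟩
      · rw [seq_succ 0, seq_zero]; exact hmem.1
      · rw [seq_succ 0, seq_zero]; exact hmem
    | succ k ih =>
      obtain ⟨hk_mem, hk_le, hk1_mem, hk_eq⟩ := ih
      have hk1_mem' : seq (k+1) ∈ Icc (0:ℝ) T := ⟨hk_mem.1.trans hk1_mem.1, hk1_mem.2⟩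
      obtain ⟨hmem, heq⟩ := step (seq (k+1)) hk1_mem'
      have heq' : h (W (seq (k+1))) = h a / 2^(k+1) := by
        have := (step (seq k) hk_mem).2
        rw [← seq_succ k] at this
        rw [this, hk_eq]
        ring
      refine ⟨hk1_mem', ?_, ?_, heq'⟩
      · rw [seq_succ (k+1)]; exact hmem.1
      · rw [seq_succ (k+1)]; exact hmem
  have hαh : ∀ k : ℕ, h (W (seq k)) = h a / 2^k := fun k => (inv k).2.2.2
  have hα_pos : ∀ k : ℕ, 0 < W (seq k) := by
    intro k
    rcases (hW_nonneg (seq k) (inv k).1).lt_or_eq with hp | hp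
    · exact hp
    · exfalso
      have : h (W (seq k)) = 0 := by rw [← hp, h_zero]
      rw [hαh k] at this
      have h2 : (0:ℝ) < 2^k := by positivity
      have : h a = 0 := by field_simp at this; linarith [this]
      linarith
  have hα_anti : ∀ k : ℕ, W (seq (k+1)) ≤ W (seq k) := by
    intro k
    exact hW_anti (seq k) (seq (k+1)) (inv k).1.1 (inv k).2.1 (inv (k+1)).1.2
  -- inf of W (seq k) is 0
  have small : ∀ x : ℝ, 0 < x → ∃ k : ℕ, W (seq k) < x := by
    intro x hx
    by_contra hcon
    push_neg at hcon
    have hhx : 0 < h x := h_pos x hx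
    obtain ⟨n, hn⟩ := pow_unbounded_of_one_lt (h a / h x) (one_lt_two (α := ℝ))
    have h1 : h x ≤ h (W (seq n)) :=
      h_mono hx.le (hW_nonneg _ (inv n).1) (hcon n)
    rw [hαh n] at h1
    have h2n : (0:ℝ) < 2^n := by positivity
    rw [div_lt_iff₀ hhx] at hn
    rw [le_div_iff₀ h2n] at h1
    nlinarith
  have cover : Ioo (0:ℝ) a ⊆ ⋃ k : ℕ, Ioc (W (seq (k+1))) (W (seq k)) := by
    intro x hx
    have hex : ∃ k : ℕ, W (seq k) < x := small x hx.1
    have hfind := Nat.find_spec hex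
    have hk0 : Nat.find hex ≠ 0 := by
      intro h0
      rw [h0, seq_zero] at hfind
      exact absurd hfind (not_lt.2 hx.2.le)
    obtain ⟨m, hm⟩ := Nat.exists_eq_succ_of_ne_zero hk0
    have hmin : ¬ W (seq m) < x := Nat.find_min hex (by omega)
    rw [hm] at hfind
    exact mem_iUnion.2 ⟨m, hfind, not_lt.1 hmin⟩
  have piece : ∀ k : ℕ,
      (∫⁻ x in Ioc (W (seq (k+1))) (W (seq k)), ENNReal.ofReal (1 / h x))
        ≤ ENNReal.ofReal (2 * C * (seq (k+1) - seq k)) := by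
    intro k
    have hβpos : 0 < W (seq (k+1)) := hα_pos (k+1)
    have hhβ : 0 < h (W (seq (k+1))) := h_pos _ hβpos
    have hβα : W (seq (k+1)) ≤ W (seq k) := hα_anti k
    have hbound : ∀ x ∈ Ioc (W (seq (k+1))) (W (seq k)),
        ENNReal.ofReal (1 / h x) ≤ ENNReal.ofReal (1 / h (W (seq (k+1)))) := by
      intro x hx
      apply ENNReal.ofReal_le_ofReal
      have hhx : 0 < h x := (hhβ.trans_le
        (h_mono hβpos.le (hβpos.le.trans hx.1.le) hx.1.le))
      exact one_div_le_one_div_of_le hhβ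
        (h_mono hβpos.le (hβpos.le.trans hx.1.le) hx.1.le)
    have hα2β : h (W (seq k)) = 2 * h (W (seq (k+1))) := by
      rw [hαh k, hαh (k+1)]
      ring
    have hkey := key (seq k) (seq (k+1)) (inv k).1.1 (inv k).2.1 (inv (k+1)).1.2
    calc (∫⁻ x in Ioc (W (seq (k+1))) (W (seq k)), ENNReal.ofReal (1 / h x))
        ≤ ∫⁻ _x in Ioc (W (seq (k+1))) (W (seq k)),
            ENNReal.ofReal (1 / h (W (seq (k+1)))) :=
          setLIntegral_mono' measurableSet_Ioc hbound
      _ = ENNReal.ofReal (1 / h (W (seq (k+1)))) *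
            volume (Ioc (W (seq (k+1))) (W (seq k))) := setLIntegral_const _ _
      _ = ENNReal.ofReal (1 / h (W (seq (k+1)))) *
            ENNReal.ofReal (W (seq k) - W (seq (k+1))) := by rw [Real.volume_Ioc]
      _ = ENNReal.ofReal ((W (seq k) - W (seq (k+1))) / h (W (seq (k+1)))) := by
            rw [← ENNReal.ofReal_mul (one_div_nonneg.2 hhβ.le)]
            congr 1
            field_simp
      _ ≤ ENNReal.ofReal (2 * C * (seq (k+1) - seq k)) := by
            apply ENNReal.ofReal_le_ofReal
            rw [div_le_iff₀ hhβ]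
            nlinarith [hkey, hα2β]
  have ht00 : ∀ n : ℕ, t0 ≤ seq n := by
    intro n
    induction n with
    | zero => rw [seq_zero]
    | succ n ih => exact ih.trans (inv n).2.1
  have gaps : ∀ n : ℕ, ∑ k ∈ Finset.range n,
      ENNReal.ofReal (2 * C * (seq (k+1) - seq k))
        ≤ ENNReal.ofReal (2 * C * (T - t0)) := by
    intro n
    rw [← ENNReal.ofReal_sum_of_nonneg (fun i _ => by
      have := (inv i).2.1
      nlinarith)]
    apply ENNReal.ofReal_le_ofReal
    have hsum : ∑ k ∈ Finset.range n, (2 * C * (seq (k+1) - seq k))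
        = 2 * C * (seq n - t0) := by
      rw [← Finset.mul_sum, Finset.sum_range_sub (fun k => seq k), seq_zero]
    rw [hsum]
    have hle : seq n ≤ T := (inv n).1.2
    nlinarith [ht00 n]
  have final : (⊤ : ENNReal) ≤ ENNReal.ofReal (2 * C * (T - t0)) := by
    calc (⊤ : ENNReal) = ∫⁻ x in Ioo (0:ℝ) a, ENNReal.ofReal (1 / h x) :=
          (h_div a ha).symm
      _ ≤ ∫⁻ x in ⋃ k : ℕ, Ioc (W (seq (k+1))) (W (seq k)),
            ENNReal.ofReal (1 / h x) := lintegral_mono_set cover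
      _ ≤ ∑' k : ℕ, ∫⁻ x in Ioc (W (seq (k+1))) (W (seq k)),
            ENNReal.ofReal (1 / h x) := lintegral_iUnion_le _ _
      _ ≤ ∑' k : ℕ, ENNReal.ofReal (2 * C * (seq (k+1) - seq k)) :=
            ENNReal.tsum_le_tsum piece
      _ ≤ ENNReal.ofReal (2 * C * (T - t0)) := ENNReal.tsum_le_of_sum_range_le gaps
  exact ENNReal.ofReal_ne_top (top_le_iff.1 final)
end

section
/- Limsup Bihari convergence argument: let T > 0, C ≥ 0, M ≥ 0, and let h : [0,∞) → [0,∞) be a continuous nondecreasing function with h(0) = 0 and h(u) > 0 for u > 0, such that for every ε > 0 the Lebesgue integral ∫_0^ε du/h(u) diverges. Let (u_k)_{k≥1} be a sequence of measurable functions u_k : [0,T] → [0,M] and (ε_k)_{k≥1} a sequence of nonnegative reals with ε_k → 0 as k → ∞, such that for every k and every t ∈ [0,T], u_k(t) ≤ ε_k + C ∫_t^T h(u_k(s)) ds. Then for every t ∈ [0,T], lim_{k→∞} u_k(t) = 0. -/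
open Set MeasureTheory intervalIntegral Filter

set_option maxHeartbeats 1000000 in
lemma bihari_key (T C ε₀ M : ℝ) (hC : 0 ≤ C) (hε₀ : 0 < ε₀)
    (H u : ℝ → ℝ)
    (hHc : Continuous H) (hHm : Monotone H)
    (hHnn : ∀ x, 0 ≤ H x) (hHpos : ∀ x, 0 < x → 0 < H x)
    (hu_meas : Measurable u) (hu_mem : ∀ t ∈ Icc (0:ℝ) T, u t ∈ Icc (0:ℝ) M)
    (t₀ : ℝ) (ht₀ : t₀ ∈ Icc (0:ℝ) T)
    (hu_le : ∀ t ∈ Icc (0:ℝ) T, u t ≤ ε₀ + C * ∫ s in t..T, H (u s)) :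
    (∫ x in ε₀..(ε₀ + C * ∫ s in t₀..T, H (u s)), 1 / H x) ≤ C * T := by
  obtain ⟨ht₀0, ht₀T⟩ := ht₀
  have hT0 : (0:ℝ) ≤ T := le_trans ht₀0 ht₀T
  set g : ℝ → ℝ := fun s => H (u s) with hg_def
  have hg_meas : Measurable g := hHc.measurable.comp hu_meas
  have hg_nn : ∀ s, 0 ≤ g s := fun s => hHnn _
  have hgM : ∀ s ∈ Icc (0:ℝ) T, g s ≤ H M := fun s hs => hHm (hu_mem s hs).2
  -- integrability of g on [0,T]
  have hgInt : IntegrableOn g (Icc (0:ℝ) T) := by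
    apply Measure.integrableOn_of_bounded (M := H M)
      measure_Icc_lt_top.ne hg_meas.aestronglyMeasurable
    filter_upwards [ae_restrict_mem measurableSet_Icc] with s hs
    rw [Real.norm_of_nonneg (hg_nn s)]; exact hgM s hs
  have hgII : ∀ a b, a ∈ Icc (0:ℝ) T → b ∈ Icc (0:ℝ) T → IntervalIntegrable g volume a b := by
    intro a b ha hb
    rw [intervalIntegrable_iff]
    exact hgInt.mono_set ((Set.uIoc_subset_uIcc).trans (uIcc_subset_Icc ha hb))
  set v : ℝ → ℝ := fun t => ε₀ + C * ∫ s in t..T, g s with hv_def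
  have hvT : v T = ε₀ := by simp [hv_def]
  have hTmem : T ∈ Icc (0:ℝ) T := ⟨hT0, le_rfl⟩
  have hv_diff : ∀ a b, a ∈ Icc (0:ℝ) T → b ∈ Icc (0:ℝ) T → a ≤ b →
      v a - v b = C * ∫ s in a..b, g s := by
    intro a b ha hb hab
    have := integral_add_adjacent_intervals (hgII a b ha hb) (hgII b T hb hTmem)
    simp only [hv_def]
    nlinarith [this]
  have hv_anti : ∀ a b, a ∈ Icc (0:ℝ) T → b ∈ Icc (0:ℝ) T → a ≤ b → v b ≤ v a := by
    intro a b ha hb hab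
    have h1 := hv_diff a b ha hb hab
    have h2 : (0:ℝ) ≤ ∫ s in a..b, g s := intervalIntegral.integral_nonneg hab fun x _ => hg_nn x
    nlinarith
  have hv_ge : ∀ t ∈ Icc (0:ℝ) T, ε₀ ≤ v t := by
    intro t ht
    have := hv_anti t T ht hTmem ht.2
    rw [hvT] at this; exact this
  have hε₀vt : ∀ t ∈ Icc (0:ℝ) T, 0 < v t := fun t ht => lt_of_lt_of_le hε₀ (hv_ge t ht)
  have hu_le_v : ∀ t ∈ Icc (0:ℝ) T, u t ≤ v t := hu_le
  set B : ℝ := v 0 with hB_def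
  have h0mem : (0:ℝ) ∈ Icc (0:ℝ) T := ⟨le_rfl, hT0⟩
  have hv_le_B : ∀ t ∈ Icc (0:ℝ) T, v t ≤ B := fun t ht => hv_anti 0 t h0mem ht ht.1
  have hε₀B : ε₀ ≤ B := hv_ge 0 h0mem
  have hg_le_v : ∀ s ∈ Icc (0:ℝ) T, g s ≤ H (v s) := fun s hs => hHm (hu_le_v s hs)
  have hHε : 0 < H ε₀ := hHpos ε₀ hε₀
  have hHv_pos : ∀ t ∈ Icc (0:ℝ) T, 0 < H (v t) :=
    fun t ht => lt_of_lt_of_le hHε (hHm (hv_ge t ht))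
  -- Lipschitz bound for v
  have hv_lip : ∀ a b, a ∈ Icc (0:ℝ) T → b ∈ Icc (0:ℝ) T → a ≤ b →
      v a - v b ≤ C * H M * (b - a) := by
    intro a b ha hb hab
    have h1 := hv_diff a b ha hb hab
    have h2 : (∫ s in a..b, g s) ≤ ∫ _ in a..b, H M := by
      apply intervalIntegral.integral_mono_on hab (hgII a b ha hb) intervalIntegrable_const
      intro x hx
      exact hgM x ⟨le_trans ha.1 hx.1, le_trans hx.2 hb.2⟩
    rw [intervalIntegral.integral_const, smul_eq_mul] at h2
    nlinarith
  -- integrability of 1/H on [ε₀, ∞)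
  have hfC : ContinuousOn (fun x => 1 / H x) (Ici ε₀) := by
    apply ContinuousOn.div continuousOn_const hHc.continuousOn
    intro x hx
    exact ne_of_gt (lt_of_lt_of_le hHε (hHm hx))
  have hfII : ∀ c d, ε₀ ≤ c → ε₀ ≤ d → IntervalIntegrable (fun x => 1 / H x) volume c d := by
    intro c d hc hd
    apply ContinuousOn.intervalIntegrable
    apply hfC.mono
    intro x hx
    exact le_trans (le_min hc hd) hx.1
  -- main estimate with 1+θ slack
  have main : ∀ θ : ℝ, 0 < θ → (∫ x in ε₀..(v t₀), 1 / H x) ≤ C * (T * (1 + θ)) := by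
    intro θ hθ
    -- uniform continuity of H on [ε₀, B]
    obtain ⟨δ, hδ, hUC⟩ := Metric.uniformContinuousOn_iff.mp
      (IsCompact.uniformContinuousOn_of_continuous (isCompact_Icc (a := ε₀) (b := B))
        hHc.continuousOn) (θ * H ε₀) (by positivity)
    obtain ⟨n, hn⟩ := exists_nat_gt (max 1 ((T - t₀) * (C * H M + 1) / δ))
    have hn1 : (1:ℝ) ≤ n := le_of_lt (lt_of_le_of_lt (le_max_left _ _) hn)
    have hn0 : (0:ℝ) < n := lt_of_lt_of_le one_pos hn1
    have hnδ : (T - t₀) * (C * H M + 1) < δ * n := by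
      have := lt_of_le_of_lt (le_max_right 1 ((T - t₀) * (C * H M + 1) / δ)) hn
      rw [div_lt_iff₀ hδ] at this
      linarith [this]
    set Δ : ℝ := (T - t₀) / n with hΔ_def
    have hΔ0 : 0 ≤ Δ := div_nonneg (by linarith) hn0.le
    set s : ℕ → ℝ := fun i => t₀ + i * Δ with hs_def
    have hs0 : s 0 = t₀ := by simp [hs_def]
    have hsn : s n = T := by
      simp only [hs_def, hΔ_def]
      field_simp
      ring
    have hs_succ : ∀ i, s (i + 1) = s i + Δ := by
      intro i; simp only [hs_def]; push_cast; ring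
    have hs_mem : ∀ i : ℕ, i ≤ n → s i ∈ Icc (0:ℝ) T := by
      intro i hi
      constructor
      · simp only [hs_def]; positivity
      · have : s i ≤ s n := by
          simp only [hs_def]
          have : (i:ℝ) ≤ n := Nat.cast_le.mpr hi
          nlinarith
        rw [hsn] at this; exact this
    -- ratio bound
    have hratio : ∀ i : ℕ, i < n → H (v (s i)) ≤ (1 + θ) * H (v (s (i+1))) := by
      intro i hi
      have hmi : s i ∈ Icc (0:ℝ) T := hs_mem i (le_of_lt hi)
      have hmi1 : s (i+1) ∈ Icc (0:ℝ) T := hs_mem (i+1) hi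
      have hle : s i ≤ s (i+1) := by rw [hs_succ]; linarith
      have hvv : v (s (i+1)) ≤ v (s i) := hv_anti _ _ hmi hmi1 hle
      have hdist : dist (v (s i)) (v (s (i+1))) < δ := by
        rw [Real.dist_eq, abs_of_nonneg (by linarith)]
        have h1 := hv_lip _ _ hmi hmi1 hle
        have h2 : s (i+1) - s i = Δ := by rw [hs_succ]; ring
        rw [h2] at h1
        have hΔn : Δ * n = T - t₀ := by rw [hΔ_def]; field_simp
        have h3 : C * H M * Δ < δ := by
          have hCHM : 0 ≤ C * H M := mul_nonneg hC (hHnn M)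
          nlinarith [hnδ, hΔn, mul_nonneg hΔ0 hn0.le, mul_nonneg hCHM hΔ0]
        linarith
      have hm1 : v (s i) ∈ Icc ε₀ B := ⟨hv_ge _ hmi, hv_le_B _ hmi⟩
      have hm2 : v (s (i+1)) ∈ Icc ε₀ B := ⟨hv_ge _ hmi1, hv_le_B _ hmi1⟩
      have := hUC _ hm1 _ hm2 hdist
      rw [Real.dist_eq] at this
      have habs : H (v (s i)) - H (v (s (i+1))) < θ * H ε₀ := lt_of_le_of_lt (le_abs_self _) this
      have hHeps : H ε₀ ≤ H (v (s (i+1))) := hHm (hv_ge _ hmi1)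
      nlinarith [hθ]
    -- induction
    have hind : ∀ i : ℕ, i ≤ n → (∫ x in (v (s i))..(v t₀), 1 / H x) ≤ C * (1 + θ) * (i * Δ) := by
      intro i
      induction i with
      | zero => intro _; simp [hs0]
      | succ i ih =>
        intro hi1
        have hi : i < n := hi1
        have hmi : s i ∈ Icc (0:ℝ) T := hs_mem i (le_of_lt hi)
        have hmi1 : s (i+1) ∈ Icc (0:ℝ) T := hs_mem (i+1) hi1
        have hle : s i ≤ s (i+1) := by rw [hs_succ]; linarith
        have hvv : v (s (i+1)) ≤ v (s i) := hv_anti _ _ hmi hmi1 hle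
        have ht₀mem : t₀ ∈ Icc (0:ℝ) T := ⟨ht₀0, ht₀T⟩
        have hvge1 : ε₀ ≤ v (s (i+1)) := hv_ge _ hmi1
        have hvge0 : ε₀ ≤ v (s i) := hv_ge _ hmi
        have hvt₀ : ε₀ ≤ v t₀ := hv_ge _ ht₀mem
        have hsplit : (∫ x in (v (s (i+1)))..(v t₀), 1 / H x)
            = (∫ x in (v (s (i+1)))..(v (s i)), 1 / H x) + ∫ x in (v (s i))..(v t₀), 1 / H x :=
          (integral_add_adjacent_intervals (hfII _ _ hvge1 hvge0) (hfII _ _ hvge0 hvt₀)).symm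
        -- piece bound
        have hpiece : (∫ x in (v (s (i+1)))..(v (s i)), 1 / H x) ≤ C * (1 + θ) * Δ := by
          have hHc1 : 0 < H (v (s (i+1))) := hHv_pos _ hmi1
          have h1 : (∫ x in (v (s (i+1)))..(v (s i)), 1 / H x)
              ≤ ∫ _ in (v (s (i+1)))..(v (s i)), 1 / H (v (s (i+1))) := by
            apply intervalIntegral.integral_mono_on hvv (hfII _ _ hvge1 hvge0)
              intervalIntegrable_const
            intro x hx
            exact one_div_le_one_div_of_le hHc1 (hHm hx.1)
          rw [intervalIntegral.integral_const, smul_eq_mul] at h1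
          -- v (s i) - v (s (i+1)) ≤ C * Δ * H (v (s i))
          have h2 : v (s i) - v (s (i+1)) ≤ C * Δ * H (v (s i)) := by
            have hd := hv_diff _ _ hmi hmi1 hle
            have h3 : (∫ x in (s i)..(s (i+1)), g x) ≤ ∫ _ in (s i)..(s (i+1)), H (v (s i)) := by
              apply intervalIntegral.integral_mono_on hle (hgII _ _ hmi hmi1)
                intervalIntegrable_const
              intro x hx
              have hxm : x ∈ Icc (0:ℝ) T := ⟨le_trans hmi.1 hx.1, le_trans hx.2 hmi1.2⟩
              exact le_trans (hg_le_v x hxm) (hHm (hv_anti _ _ hmi hxm hx.1))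
            rw [intervalIntegral.integral_const, smul_eq_mul] at h3
            have h4 : s (i+1) - s i = Δ := by rw [hs_succ]; ring
            rw [h4] at h3
            calc v (s i) - v (s (i+1)) = C * ∫ x in (s i)..(s (i+1)), g x := hd
              _ ≤ C * (Δ * H (v (s i))) := mul_le_mul_of_nonneg_left h3 hC
              _ = C * Δ * H (v (s i)) := (mul_assoc _ _ _).symm
          have h5 : v (s i) - v (s (i+1)) ≤ C * (1 + θ) * Δ * H (v (s (i+1))) := by
            have hr := hratio i hi
            calc v (s i) - v (s (i+1)) ≤ C * Δ * H (v (s i)) := h2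
              _ ≤ C * Δ * ((1 + θ) * H (v (s (i+1)))) :=
                  mul_le_mul_of_nonneg_left hr (mul_nonneg hC hΔ0)
              _ = C * (1 + θ) * Δ * H (v (s (i+1))) := by ring
          calc (∫ x in (v (s (i+1)))..(v (s i)), 1 / H x)
              ≤ (v (s i) - v (s (i+1))) * (1 / H (v (s (i+1)))) := h1
            _ ≤ C * (1 + θ) * Δ := by
                rw [mul_one_div, div_le_iff₀ hHc1]
                exact h5
        rw [hsplit]
        have hih := ih (le_of_lt hi)
        have hexp : C * (1 + θ) * (((i:ℝ)+1) * Δ) = C * (1 + θ) * ((i:ℝ) * Δ) + C * (1 + θ) * Δ := by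
          ring
        push_cast
        rw [hexp]
        linarith
    have := hind n le_rfl
    rw [hsn, hvT] at this
    have hnΔ : (n:ℝ) * Δ = T - t₀ := by rw [hΔ_def]; field_simp
    rw [hnΔ] at this
    calc (∫ x in ε₀..(v t₀), 1 / H x) ≤ C * (1 + θ) * (T - t₀) := this
      _ ≤ C * (T * (1 + θ)) := by
          nlinarith [mul_nonneg (mul_nonneg hC (by linarith : (0:ℝ) ≤ 1 + θ)) ht₀0]
  -- conclude
  have hvt₀eq : (ε₀ + C * ∫ s in t₀..T, H (u s)) = v t₀ := rfl
  rw [hvt₀eq]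
  apply le_of_forall_pos_le_add
  intro ϑ hϑ
  have hCT : 0 ≤ C * T := mul_nonneg hC hT0
  have hθ : 0 < ϑ / (C * T + 1) := by positivity
  have := main _ hθ
  calc (∫ x in ε₀..(v t₀), 1 / H x) ≤ C * (T * (1 + ϑ / (C * T + 1))) := this
    _ ≤ C * T + ϑ := by
        have h1 : C * T * (ϑ / (C * T + 1)) ≤ (C * T + 1) * (ϑ / (C * T + 1)) := by
          apply mul_le_mul_of_nonneg_right (by linarith) hθ.le
        have h2 : (C * T + 1) * (ϑ / (C * T + 1)) = ϑ := by field_simp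
        nlinarith


set_option maxHeartbeats 1000000 in
/-- Limsup Bihari convergence: if `u_k : [0,T] → [0,M]` are measurable,
`ε_k ≥ 0` with `ε_k → 0`, `h` is continuous nondecreasing with `h 0 = 0`, `h u > 0`
for `u > 0` and `∫_{0+} du / h u = ∞`, and `u_k t ≤ ε_k + C ∫_t^T h (u_k s) ds`
for all `k` and `t ∈ [0,T]`, then `u_k t → 0` for every `t ∈ [0,T]`. -/
theorem stmt10 (T C M : ℝ) (h : ℝ → ℝ) (u : ℕ → ℝ → ℝ) (ε : ℕ → ℝ)
    (hT : 0 < T) (hC : 0 ≤ C) (hM : 0 ≤ M)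
    (h_nonneg : ∀ x ∈ Ici (0 : ℝ), 0 ≤ h x)
    (h_cont : ContinuousOn h (Ici (0 : ℝ)))
    (h_mono : MonotoneOn h (Ici (0 : ℝ)))
    (h_zero : h 0 = 0)
    (h_pos : ∀ x : ℝ, 0 < x → 0 < h x)
    (h_div : ∀ δ : ℝ, 0 < δ →
      ∫⁻ x in Ioo (0 : ℝ) δ, ENNReal.ofReal (1 / h x) = ⊤)
    (hu_meas : ∀ k : ℕ, Measurable (u k))
    (hu_mem : ∀ k : ℕ, ∀ t ∈ Icc (0 : ℝ) T, u k t ∈ Icc (0 : ℝ) M)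
    (hε_nonneg : ∀ k : ℕ, 0 ≤ ε k)
    (hε_lim : Tendsto ε atTop (nhds 0))
    (hu_bound : ∀ k : ℕ, ∀ t ∈ Icc (0 : ℝ) T,
      u k t ≤ ε k + C * ∫ s in t..T, h (u k s)) :
    ∀ t ∈ Icc (0 : ℝ) T, Tendsto (fun k => u k t) atTop (nhds 0) := by
  set H : ℝ → ℝ := fun x => h (max x 0) with hH_def
  have hHc : Continuous H :=
    h_cont.comp_continuous (continuous_id.max continuous_const) (fun x => le_max_right x 0)
  have hHm : Monotone H := fun a b hab =>
    h_mono (le_max_right a 0) (le_max_right b 0) (max_le_max hab le_rfl)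
  have hHnn : ∀ x, 0 ≤ H x := fun x => h_nonneg _ (le_max_right x 0)
  have hHeq : ∀ x : ℝ, 0 ≤ x → H x = h x := by
    intro x hx
    simp only [hH_def, max_eq_left hx]
  have hHpos : ∀ x : ℝ, 0 < x → 0 < H x := by
    intro x hx
    rw [hHeq x hx.le]
    exact h_pos x hx
  have hfnn : ∀ x : ℝ, 0 ≤ 1 / H x := fun x => one_div_nonneg.mpr (hHnn x)
  -- choice of small ε₀
  have lemA : ∀ η : ℝ, 0 < η → ∃ ε₀ : ℝ, 0 < ε₀ ∧ ε₀ < η ∧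
      C * T < ∫ x in ε₀..η, 1 / H x := by
    intro η hη
    have hdiv : ∫⁻ x in Ioo (0:ℝ) η, ENNReal.ofReal (1 / H x) = ⊤ := by
      rw [setLIntegral_congr_fun measurableSet_Ioo
        (fun x hx => show ENNReal.ofReal (1 / H x) = ENNReal.ofReal (1 / h x) by rw [hHeq x (le_of_lt hx.1)])]
      exact h_div η hη
    set μ := volume.withDensity (fun x => ENNReal.ofReal (1 / H x)) with hμ
    have hμIoo : ∀ a b : ℝ, μ (Ioo a b) = ∫⁻ x in Ioo a b, ENNReal.ofReal (1 / H x) :=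
      fun a b => withDensity_apply _ measurableSet_Ioo
    have hmono : Monotone (fun n : ℕ => Ioo (η / (n + 2)) η) := by
      intro a b hab
      apply Ioo_subset_Ioo_left
      have hc : ((a:ℝ) + 2) ≤ (b:ℝ) + 2 := by
        have := (Nat.cast_le (α := ℝ)).mpr hab; linarith
      exact div_le_div_of_nonneg_left hη.le (by positivity) hc
    have hunion : (⋃ n : ℕ, Ioo (η / (n + 2)) η) = Ioo 0 η := by
      ext x
      simp only [mem_iUnion, mem_Ioo]
      constructor
      · rintro ⟨n, h1, h2⟩
        exact ⟨lt_trans (by positivity) h1, h2⟩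
      · rintro ⟨h1, h2⟩
        obtain ⟨n, hn⟩ := exists_nat_gt (η / x)
        refine ⟨n, ?_, h2⟩
        rw [div_lt_iff₀ (by positivity)]
        rw [div_lt_iff₀ h1] at hn
        nlinarith
    have hsup : (⨆ n : ℕ, μ (Ioo (η / (n + 2)) η)) = ⊤ := by
      rw [← hmono.directed_le.measure_iUnion, hunion, hμIoo]
      exact hdiv
    have hCT : ENNReal.ofReal (C * T) < ⨆ n : ℕ, μ (Ioo (η / (n + 2)) η) := by
      rw [hsup]; exact ENNReal.ofReal_lt_top
    obtain ⟨n, hn⟩ := lt_iSup_iff.mp hCT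
    set c := η / ((n:ℝ) + 2) with hc_def
    have hc0 : 0 < c := by positivity
    have hcη : c < η := by
      rw [hc_def, div_lt_iff₀ (by positivity)]
      nlinarith
    refine ⟨c, hc0, hcη, ?_⟩
    have hHc0 : 0 < H c := hHpos c hc0
    have hfint : IntegrableOn (fun x => 1 / H x) (Ioo c η) := by
      apply Measure.integrableOn_of_bounded (M := 1 / H c) measure_Ioo_lt_top.ne
        (measurable_const.div hHc.measurable).aestronglyMeasurable
      filter_upwards [ae_restrict_mem measurableSet_Ioo] with x hx
      simp only [Pi.div_apply]
      rw [Real.norm_of_nonneg (hfnn x)]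
      exact one_div_le_one_div_of_le hHc0 (hHm hx.1.le)
    have hof := ofReal_integral_eq_lintegral_ofReal hfint
      (Filter.Eventually.of_forall fun x => hfnn x)
    have hlt : ENNReal.ofReal (C * T) < ENNReal.ofReal (∫ x in Ioo c η, 1 / H x) := by
      rw [hof]
      rw [hμIoo] at hn
      exact hn
    have hval : C * T < ∫ x in Ioo c η, 1 / H x :=
      (ENNReal.ofReal_lt_ofReal_iff_of_nonneg (mul_nonneg hC hT.le)).mp hlt
    rw [intervalIntegral.integral_of_le hcη.le, integral_Ioc_eq_integral_Ioo]
    exact hval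
  -- main argument
  intro t ht
  rw [Metric.tendsto_atTop]
  intro η hη
  obtain ⟨ε₀, hε₀, hε₀η, hA⟩ := lemA η hη
  obtain ⟨N, hN⟩ := eventually_atTop.mp (hε_lim.eventually_lt_const hε₀)
  refine ⟨N, fun k hk => ?_⟩
  have hεk : ε k ≤ ε₀ := (hN k hk).le
  have hbound' : ∀ t' ∈ Icc (0:ℝ) T, u k t' ≤ ε₀ + C * ∫ s in t'..T, H (u k s) := by
    intro t' ht'
    have heq : (∫ s in t'..T, h (u k s)) = ∫ s in t'..T, H (u k s) := by
      apply intervalIntegral.integral_congr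
      intro x hx
      rw [uIcc_of_le ht'.2] at hx
      exact (hHeq _ (hu_mem k x ⟨le_trans ht'.1 hx.1, hx.2⟩).1).symm
    have hb := hu_bound k t' ht'
    rw [heq] at hb
    linarith
  have hkey := bihari_key T C ε₀ M hC hε₀ H (u k) hHc hHm hHnn hHpos
    (hu_meas k) (hu_mem k) t ht hbound'
  set vt := ε₀ + C * ∫ s in t..T, H (u k s) with hvt_def
  have hu_vt : u k t ≤ vt := hbound' t ht
  have hvt_ge : ε₀ ≤ vt := by
    have h1 : (0:ℝ) ≤ ∫ s in t..T, H (u k s) :=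
      intervalIntegral.integral_nonneg ht.2 (fun x _ => hHnn _)
    nlinarith [mul_nonneg hC h1]
  have hHε : 0 < H ε₀ := hHpos ε₀ hε₀
  have hfII : ∀ c d : ℝ, ε₀ ≤ c → ε₀ ≤ d →
      IntervalIntegrable (fun x => 1 / H x) volume c d := by
    intro c d hc hd
    apply ContinuousOn.intervalIntegrable
    apply ContinuousOn.mono (s := Ici ε₀)
    · apply ContinuousOn.div continuousOn_const hHc.continuousOn
      intro x hx
      exact ne_of_gt (lt_of_lt_of_le hHε (hHm hx))
    · intro x hx
      exact le_trans (le_min hc hd) hx.1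
  have hlt : u k t < η := by
    by_contra hcon
    push_neg at hcon
    have hη_vt : η ≤ vt := le_trans hcon hu_vt
    have hsplit := integral_add_adjacent_intervals (μ := volume) (f := fun x => 1 / H x)
      (hfII ε₀ η le_rfl hε₀η.le) (hfII η vt hε₀η.le (le_trans hε₀η.le hη_vt))
    have hnn2 : 0 ≤ ∫ x in η..vt, 1 / H x :=
      intervalIntegral.integral_nonneg hη_vt fun x _ => hfnn x
    have hgt : C * T < ∫ x in ε₀..vt, 1 / H x := by rw [← hsplit]; linarith
    linarith
  calc dist (u k t) 0 = |u k t| := by simp [Real.dist_eq]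
    _ = u k t := abs_of_nonneg (hu_mem k t ht).1
    _ < η := hlt
end
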